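/- arXiv:quant-ph/0603175 — 6 statements merged into one kernel-verified Lean document; each statement's English description precedes it below -/
import Mathlib

section
/- Intertwining property of the adiabatic time evolution (Lemma 1): The adiabatic propagator satisfies U^A_τ(s) P(0) = P(s) U^A_τ(s) for all s ∈ [0,1]. -/
/-!
Since `P` is idempotent, differentiating `P² = P` gives `Ṗ = ṖP + PṖ` and hence `PṖP = 0`;
with `[H, P] = 0` this yields `A P = P A + Ṗ` for the generator `A = -iτH + [Ṗ, P]`
of `U^A_τ`. That identity says exactly that the Heisenberg-picture projection
`(U^A_τ)⁻¹ P U^A_τ` has zero derivative, so it stays equal to its initial value `P(0)`.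
-/

open Set Ring

theorem IsIdempotentElem.mul_mul_eq_zero_of_mul_add_mul_eq_self {R : Type*} [Ring R] {p q : R}
    (hp : IsIdempotentElem p) (hq : q * p + p * q = q) : p * q * p = 0 := by
  have h : p * q * p = p * q * p + p * q * p := calc
    p * q * p = p * (q * p + p * q) * p := by rw [hq]
    _ = p * q * (p * p) + p * p * q * p := by noncomm_ring
    _ = p * q * p + p * q * p := by rw [hp.eq]
  simpa using h

theorem IsIdempotentElem.commutator_mul_eq {R : Type*} [Ring R] {p q : R}
    (hp : IsIdempotentElem p) (hq : q * p + p * q = q) :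
    (q * p - p * q) * p = p * (q * p - p * q) + q := by
  have hpqp := hp.mul_mul_eq_zero_of_mul_add_mul_eq_self hq
  calc (q * p - p * q) * p = q * (p * p) - p * q * p := by noncomm_ring
    _ = q - p * q := by rw [hp.eq, hpqp, sub_zero, eq_sub_of_add_eq hq]
    _ = p * q * p - p * p * q + q := by rw [hp.eq, hpqp]; abel
    _ = p * (q * p - p * q) + q := by noncomm_ring

theorem IsIdempotentElem.add_commutator_mul_eq {R : Type*} [Ring R] {p q c : R}
    (hp : IsIdempotentElem p) (hq : q * p + p * q = q) (hc : Commute c p) :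
    (c + (q * p - p * q)) * p = p * (c + (q * p - p * q)) + q := by
  rw [add_mul, mul_add, hc.eq, hp.commutator_mul_eq hq, add_assoc]

section Calculus

variable {R : Type*} [NormedRing R] [NormedAlgebra ℝ R]

theorem HasDerivWithinAt.mul_add_mul_eq_of_isIdempotentElem {P : ℝ → R} {P' : R} {s : Set ℝ}
    {t : ℝ} (hP : HasDerivWithinAt P P' s t) (hs : UniqueDiffWithinAt ℝ s t) (ht : t ∈ s)
    (hidem : ∀ u ∈ s, IsIdempotentElem (P u)) : P' * P t + P t * P' = P' :=
  hs.eq_deriv s ((hP.mul hP).congr (fun u hu => (hidem u hu).symm) (hidem t ht).symm) hP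

variable [HasSummableGeomSeries R]

theorem HasDerivAt.ringInverse {U : ℝ → R} {U' : R} {t : ℝ} (hU : HasDerivAt U U' t)
    (ht : IsUnit (U t)) :
    HasDerivAt (fun s => (U s)⁻¹ʳ) (-((U t)⁻¹ʳ * U' * (U t)⁻¹ʳ)) t := by
  obtain ⟨u, hu⟩ := ht
  have := (hu ▸ hasFDerivAt_ringInverse (𝕜 := ℝ) u).comp_hasDerivAt t hU
  rw [← hu, Ring.inverse_unit]
  exact this

theorem HasDerivAt.inverse_mul_mul {U X : ℝ → R} {A X' : R} {t : ℝ} (hU : IsUnit (U t))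
    (hUd : HasDerivAt U (A * U t) t) (hX : HasDerivAt X X' t) :
    HasDerivAt (fun s => (U s)⁻¹ʳ * X s * U s)
      ((U t)⁻¹ʳ * (X' + X t * A - A * X t) * U t) t := by
  convert ((hUd.ringInverse hU).fun_mul hX).fun_mul hUd using 1
  rw [← mul_assoc _ A, mul_inverse_cancel_right _ _ hU]
  noncomm_ring

theorem inverse_mul_mul_eq_of_mul_eq_mul_add {U X A X' : ℝ → R} {a b : ℝ}
    (hU : ∀ t ∈ Icc a b, IsUnit (U t)) (hUd : ∀ t ∈ Icc a b, HasDerivAt U (A t * U t) t)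
    (hX : ∀ t ∈ Icc a b, HasDerivAt X (X' t) t)
    (hAX : ∀ t ∈ Icc a b, A t * X t = X t * A t + X' t) :
    ∀ t ∈ Icc a b, (U t)⁻¹ʳ * X t * U t = (U a)⁻¹ʳ * X a * U a := by
  have hderiv : ∀ t ∈ Icc a b, HasDerivAt (fun s => (U s)⁻¹ʳ * X s * U s) 0 t := by
    intro t ht
    have h := (hUd t ht).inverse_mul_mul (hU t ht) (hX t ht)
    rwa [hAX t ht, add_comm (X t * A t), sub_self, mul_zero, zero_mul] at h
  exact constant_of_has_deriv_right_zero
    (fun t ht => (hderiv t ht).continuousAt.continuousWithinAt)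
    (fun t ht => (hderiv t (Ico_subset_Icc_self ht)).hasDerivWithinAt)

end Calculus

theorem adiabatic_intertwining_general
    {V : Type*} [NormedAddCommGroup V] [InnerProductSpace ℂ V] [FiniteDimensional ℂ V]
    (H P P' : ℝ → V →L[ℂ] V) (τ : ℝ)
    (hPidem : ∀ s ∈ Set.Icc (0:ℝ) 1, P s ∘L P s = P s)
    (hPH : ∀ s ∈ Set.Icc (0:ℝ) 1, H s ∘L P s = P s ∘L H s)
    (hP' : ∀ s ∈ Set.Icc (0:ℝ) 1, HasDerivAt P (P' s) s)
    (UA : ℝ → V →L[ℂ] V)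
    (hUA0 : UA 0 = 1)
    (hUAunitary : ∀ s ∈ Set.Icc (0:ℝ) 1,
      ContinuousLinearMap.adjoint (UA s) ∘L UA s = 1 ∧
      UA s ∘L ContinuousLinearMap.adjoint (UA s) = 1)
    (hUAde : ∀ s ∈ Set.Icc (0:ℝ) 1,
      HasDerivAt UA
        (((-(Complex.I * (τ : ℂ))) • H s + (P' s ∘L P s - P s ∘L P' s)) ∘L UA s) s) :
    ∀ s ∈ Set.Icc (0:ℝ) 1, UA s ∘L P 0 = P s ∘L UA s := by
  simp only [← ContinuousLinearMap.mul_def] at hPidem hPH hUAunitary hUAde ⊢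
  have hunit : ∀ s ∈ Icc (0:ℝ) 1, IsUnit (UA s) := fun s hs =>
    ⟨⟨UA s, _, (hUAunitary s hs).2, (hUAunitary s hs).1⟩, rfl⟩
  have hLeibniz : ∀ s ∈ Icc (0:ℝ) 1, P' s * P s + P s * P' s = P' s := fun s hs =>
    (hP' s hs).hasDerivWithinAt.mul_add_mul_eq_of_isIdempotentElem
      (uniqueDiffOn_Icc zero_lt_one s hs) hs hPidem
  have hgen : ∀ s ∈ Icc (0:ℝ) 1, _ := fun s hs =>
    IsIdempotentElem.add_commutator_mul_eq (hPidem s hs) (hLeibniz s hs)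
      (Commute.smul_left (hPH s hs) (-(Complex.I * (τ : ℂ))))
  intro s hs
  have hconj := inverse_mul_mul_eq_of_mul_eq_mul_add hunit hUAde hP' hgen s hs
  rw [hUA0, Ring.inverse_one, one_mul, mul_one] at hconj
  rw [← hconj, ← mul_assoc, ← mul_assoc, mul_inverse_cancel _ (hunit s hs), one_mul]

/-- **Intertwining property of the adiabatic time evolution (Lemma 1).**

`H s` is a continuous family of self-adjoint operators on a finite-dimensional complex
inner product space, `P s` a continuously differentiable family of orthogonal
projections (derivative `P'`) commuting with `H s`.  For `τ > 0`, the adiabatic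
propagator `UA` solves `i ∂ₛ UA = τ H^A_τ(s) UA`, `UA 0 = 1`, where
`H^A_τ(s) = H s + (i/τ)[Ṗ s, P s]`; equivalently
`∂ₛ UA = (-(iτ) • H s + [Ṗ s, P s]) ∘ UA`, and `UA s` is unitary.

Then `UA s ∘ P 0 = P s ∘ UA s` for all `s ∈ [0,1]`. -/
theorem adiabatic_intertwining
    {V : Type*} [NormedAddCommGroup V] [InnerProductSpace ℂ V] [FiniteDimensional ℂ V]
    (H P P' : ℝ → V →L[ℂ] V) (τ : ℝ) (hτ : 0 < τ)
    (hHsa : ∀ s ∈ Set.Icc (0:ℝ) 1, IsSelfAdjoint (H s))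
    (hHc : ContinuousOn H (Set.Icc (0:ℝ) 1))
    (hPsa : ∀ s ∈ Set.Icc (0:ℝ) 1, IsSelfAdjoint (P s))
    (hPidem : ∀ s ∈ Set.Icc (0:ℝ) 1, P s ∘L P s = P s)
    (hPH : ∀ s ∈ Set.Icc (0:ℝ) 1, H s ∘L P s = P s ∘L H s)
    (hP' : ∀ s ∈ Set.Icc (0:ℝ) 1, HasDerivAt P (P' s) s)
    (hP'c : ContinuousOn P' (Set.Icc (0:ℝ) 1))
    (UA : ℝ → V →L[ℂ] V)
    (hUA0 : UA 0 = 1)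
    (hUAunitary : ∀ s ∈ Set.Icc (0:ℝ) 1,
      ContinuousLinearMap.adjoint (UA s) ∘L UA s = 1 ∧
      UA s ∘L ContinuousLinearMap.adjoint (UA s) = 1)
    (hUAde : ∀ s ∈ Set.Icc (0:ℝ) 1,
      HasDerivAt UA
        (((-(Complex.I * (τ : ℂ))) • H s + (P' s ∘L P s - P s ∘L P' s)) ∘L UA s) s) :
    ∀ s ∈ Set.Icc (0:ℝ) 1, UA s ∘L P 0 = P s ∘L UA s :=
  adiabatic_intertwining_general H P P' τ hPidem hPH hP' UA hUA0 hUAunitary hUAde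
end

section
/- Volterra integral equation for the wave operator: The wave operator Ω_τ(s) := U^A_τ(s)* U_τ(s) satisfies Ω_τ(s) = 1 − ∫₀ˢ K_τ(s') Ω_τ(s') ds' for all s ∈ [0,1], where K_τ(s) := U^A_τ(s)* [Ṗ(s), P(s)] U^A_τ(s). -/
/-- **Volterra integral equation for the wave operator.**

`H s` is a continuous family of self-adjoint operators on a finite-dimensional complex
inner product space, `P s` a continuously differentiable family of orthogonal
projections (derivative `P'`) commuting with `H s`.  For `τ > 0`, `U` is the unitary
propagator of `i ∂ₛ U = τ H(s) U`, `U 0 = 1`, and `UA` the unitary adiabatic propagator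
of `i ∂ₛ UA = (τ H(s) + i[Ṗ s, P s]) UA`, `UA 0 = 1`.

Then the wave operator `Ω(s) := UA(s)* U(s)` satisfies
`Ω(s) = 1 − ∫₀ˢ K(s') Ω(s') ds'`, where `K(s) := UA(s)* [Ṗ s, P s] UA(s)`. -/
theorem wave_operator_volterra
    {V : Type*} [NormedAddCommGroup V] [InnerProductSpace ℂ V] [FiniteDimensional ℂ V]
    (H P P' : ℝ → V →L[ℂ] V) (τ : ℝ) (hτ : 0 < τ)
    (hHsa : ∀ s ∈ Set.Icc (0:ℝ) 1, IsSelfAdjoint (H s))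
    (hHc : ContinuousOn H (Set.Icc (0:ℝ) 1))
    (hPsa : ∀ s ∈ Set.Icc (0:ℝ) 1, IsSelfAdjoint (P s))
    (hPidem : ∀ s ∈ Set.Icc (0:ℝ) 1, P s ∘L P s = P s)
    (hPH : ∀ s ∈ Set.Icc (0:ℝ) 1, H s ∘L P s = P s ∘L H s)
    (hP' : ∀ s ∈ Set.Icc (0:ℝ) 1, HasDerivAt P (P' s) s)
    (hP'c : ContinuousOn P' (Set.Icc (0:ℝ) 1))
    (U UA : ℝ → V →L[ℂ] V)
    (hU0 : U 0 = 1) (hUA0 : UA 0 = 1)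
    (hUunitary : ∀ s ∈ Set.Icc (0:ℝ) 1,
      ContinuousLinearMap.adjoint (U s) ∘L U s = 1 ∧
      U s ∘L ContinuousLinearMap.adjoint (U s) = 1)
    (hUAunitary : ∀ s ∈ Set.Icc (0:ℝ) 1,
      ContinuousLinearMap.adjoint (UA s) ∘L UA s = 1 ∧
      UA s ∘L ContinuousLinearMap.adjoint (UA s) = 1)
    (hUde : ∀ s ∈ Set.Icc (0:ℝ) 1,
      HasDerivAt U ((-(Complex.I * (τ : ℂ))) • (H s ∘L U s)) s)
    (hUAde : ∀ s ∈ Set.Icc (0:ℝ) 1,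
      HasDerivAt UA
        (((-(Complex.I * (τ : ℂ))) • H s + (P' s ∘L P s - P s ∘L P' s)) ∘L UA s) s) :
    ∀ s ∈ Set.Icc (0:ℝ) 1,
      ContinuousLinearMap.adjoint (UA s) ∘L U s =
        1 - ∫ t in (0:ℝ)..s,
          (ContinuousLinearMap.adjoint (UA t) ∘L (P' t ∘L P t - P t ∘L P' t) ∘L UA t)
            ∘L (ContinuousLinearMap.adjoint (UA t) ∘L U t) := by
  intro s hs
  -- notation
  set C : ℝ → V →L[ℂ] V := fun t => P' t ∘L P t - P t ∘L P' t with hC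
  set Ω : ℝ → V →L[ℂ] V := fun t => ContinuousLinearMap.adjoint (UA t) ∘L U t with hΩ
  -- P' is self-adjoint on Icc
  have hP'sa : ∀ t ∈ Set.Icc (0:ℝ) 1, IsSelfAdjoint (P' t) := by
    intro t ht
    have h1 : HasDerivWithinAt (fun u => star (P u)) (star (P' t)) (Set.Icc (0:ℝ) 1) t :=
      ((hP' t ht).star).hasDerivWithinAt
    have h2 : HasDerivWithinAt P (P' t) (Set.Icc (0:ℝ) 1) t := (hP' t ht).hasDerivWithinAt
    have h1' : HasDerivWithinAt P (star (P' t)) (Set.Icc (0:ℝ) 1) t := by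
      refine h1.congr (fun u hu => ?_) ?_
      · exact (hPsa u hu).star_eq.symm
      · exact (hPsa t ht).star_eq.symm
    have := ((uniqueDiffOn_Icc (by norm_num : (0:ℝ) < 1)) t ht).eq_deriv _ h1' h2
    exact this
  -- derivative of Ω
  have hΩde : ∀ t ∈ Set.Icc (0:ℝ) 1, HasDerivAt Ω
      (-((ContinuousLinearMap.adjoint (UA t) ∘L C t ∘L UA t) ∘L Ω t)) t := by
    intro t ht
    have hstar : HasDerivAt (fun u => star (UA u))
        (star (((-(Complex.I * (τ : ℂ))) • H t + C t) ∘L UA t)) t := (hUAde t ht).star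
    have hcomp := hstar.mul (hUde t ht)
    have hstarC : star (C t) = -(C t) := by
      show star (P' t * P t - P t * P' t) = -(P' t * P t - P t * P' t)
      rw [star_sub, star_mul, star_mul, (hPsa t ht).star_eq, (hP'sa t ht).star_eq]
      abel
    have hstarA : star (((-(Complex.I * (τ : ℂ))) • H t + C t) ∘L UA t)
        = star (UA t) * ((Complex.I * (τ : ℂ)) • H t - C t) := by
      show star (((-(Complex.I * (τ : ℂ))) • H t + C t) * UA t) = _
      rw [star_mul, star_add, star_smul, hstarC, (hHsa t ht).star_eq]
      congr 1
      rw [sub_eq_add_neg]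
      congr 2
      simp [Complex.ext_iff]
    have hone : UA t * star (UA t) = 1 := by
      show UA t ∘L ContinuousLinearMap.adjoint (UA t) = 1
      exact (hUAunitary t ht).2
    have key : star (((-(Complex.I * (τ : ℂ))) • H t + C t) ∘L UA t) * U t
        + star (UA t) * ((-(Complex.I * (τ : ℂ))) • (H t ∘L U t))
        = -((star (UA t) * C t * UA t) * (star (UA t) * U t)) := by
      rw [hstarA]
      have e2 : (star (UA t) * C t * UA t) * (star (UA t) * U t)
          = star (UA t) * C t * U t := by
        rw [mul_assoc, ← mul_assoc (UA t), hone, one_mul]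
      rw [e2]
      show star (UA t) * ((Complex.I * (τ : ℂ)) • H t - C t) * U t
          + star (UA t) * ((-(Complex.I * (τ : ℂ))) • (H t * U t))
          = -(star (UA t) * C t * U t)
      simp only [mul_sub, sub_mul, smul_mul_assoc, mul_smul_comm, neg_smul, mul_neg,
        neg_mul, smul_neg, mul_assoc]
      abel
    rw [key] at hcomp
    exact hcomp
  -- continuity of everything on Icc
  have hUAc : ContinuousOn UA (Set.Icc (0:ℝ) 1) :=
    fun t ht => ((hUAde t ht).continuousAt).continuousWithinAt
  have hUc : ContinuousOn U (Set.Icc (0:ℝ) 1) :=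
    fun t ht => ((hUde t ht).continuousAt).continuousWithinAt
  have hPc : ContinuousOn P (Set.Icc (0:ℝ) 1) :=
    fun t ht => ((hP' t ht).continuousAt).continuousWithinAt
  have hUAsc : ContinuousOn (fun t => ContinuousLinearMap.adjoint (UA t))
      (Set.Icc (0:ℝ) 1) := by
    have : ContinuousOn (fun t => star (UA t)) (Set.Icc (0:ℝ) 1) := hUAc.star
    simpa [ContinuousLinearMap.star_eq_adjoint] using this
  have hCc : ContinuousOn C (Set.Icc (0:ℝ) 1) :=
    (hP'c.clm_comp hPc).sub (hPc.clm_comp hP'c)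
  have hInteg : ContinuousOn
      (fun t => -((ContinuousLinearMap.adjoint (UA t) ∘L C t ∘L UA t) ∘L Ω t))
      (Set.Icc (0:ℝ) 1) := by
    have hΩc : ContinuousOn Ω (Set.Icc (0:ℝ) 1) := hUAsc.clm_comp hUc
    exact ((hUAsc.clm_comp (hCc.clm_comp hUAc)).clm_comp hΩc).neg
  -- FTC
  have hsub : Set.uIcc (0:ℝ) s ⊆ Set.Icc (0:ℝ) 1 := by
    rw [Set.uIcc_of_le hs.1]
    exact Set.Icc_subset_Icc le_rfl hs.2
  have hftc : ∫ t in (0:ℝ)..s,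
      (-((ContinuousLinearMap.adjoint (UA t) ∘L C t ∘L UA t) ∘L Ω t)) = Ω s - Ω 0 := by
    apply intervalIntegral.integral_eq_sub_of_hasDerivAt
    · intro t ht
      exact hΩde t (hsub ht)
    · exact (hInteg.mono hsub).intervalIntegrable
  have hΩ0 : Ω 0 = 1 := by
    rw [hΩ]
    show ContinuousLinearMap.adjoint (UA 0) * U 0 = 1
    rw [hU0, hUA0, ← ContinuousLinearMap.star_eq_adjoint, star_one, one_mul]
  rw [intervalIntegral.integral_neg, hΩ0] at hftc
  have h2 : (∫ t in (0:ℝ)..s,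
      ((ContinuousLinearMap.adjoint (UA t) ∘L C t ∘L UA t) ∘L Ω t)) = 1 - Ω s := by
    rw [← neg_sub (Ω s), ← hftc, neg_neg]
  have : Ω s = 1 - ∫ t in (0:ℝ)..s,
      ((ContinuousLinearMap.adjoint (UA t) ∘L C t ∘L UA t) ∘L Ω t) := by
    rw [h2]; abel
  simp only [hC, hΩ] at this
  exact this
end

section
/- Twiddle operation (Lemma 2): Let X be a linear operator on V and define X̃ := (2πi)^{−1} ∮_Γ (H − z)^{−1} X (H − z)^{−1} dz. Then: (a) P X̃ P = 0 and Q X̃ Q = 0 where Q := 1 − P; (b) [H, X̃] = PX − XP; and (c) for any continuously differentiable family of orthogonal projections s ↦ P(s) with P(s₀) = P at the given point s₀, setting H^A_τ := H + (i/τ)[Ṗ(s₀), P], one has P [H^A_τ, X̃] Q = P X Q and Q [H^A_τ, X̃] P = − Q X P. -/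
/-!
Diagonalise `H = ∑ κᵢ Eᵢ` with rank-one orthogonal idempotents `Eᵢ`. On `Γ` the resolvent is
`∑ (κᵢ - z)⁻¹ Eᵢ`, so the residue theorem gives `P = ∑ χᵢ Eᵢ` and `X̃ = ∑ cᵢⱼ Eᵢ X Eⱼ`, where
`χ` is the indicator of the disc bounded by `Γ` and `cᵢⱼ = (χᵢ - χⱼ) / (κᵢ - κⱼ)` is its divided
difference. Parts (a) and (b) are then identities between coefficients:
`χᵢ χⱼ cᵢⱼ = 0 = (1 - χᵢ) (1 - χⱼ) cᵢⱼ` and `(κᵢ - κⱼ) cᵢⱼ = χᵢ - χⱼ`.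
Part (c) is pure algebra: `X̃` and `[Ṗ, P]` are block off-diagonal for `1 = P + (1 - P)`, so
their commutator is block diagonal and only `[H, X̃] = PX - XP` reaches the off-diagonal corners.
-/

open Metric Set Complex Real InnerProductSpace

section SpectralResolution

variable {𝕜 A ι : Type*} [Field 𝕜] [Ring A] [Algebra 𝕜 A] [Fintype ι] {E : ι → A}

def schurMul (E : ι → A) (a : ι → ι → 𝕜) (X : A) : A :=
  ∑ i, ∑ j, a i j • (E i * X * E j)

noncomputable def spectralProj (E : ι → A) (κ : ι → 𝕜) (s : Set 𝕜) : A :=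
  ∑ i, s.indicator (1 : 𝕜 → 𝕜) (κ i) • E i

/-- `slope` returns `0` at coinciding eigenvalues `κ i = κ j`, the right coefficient there. -/
noncomputable def twiddle (E : ι → A) (κ : ι → 𝕜) (s : Set 𝕜) (X : A) : A :=
  schurMul E (fun i j => slope (s.indicator (1 : 𝕜 → 𝕜)) (κ j) (κ i)) X

lemma sum_smul_mul_mul_sum_smul (f g : ι → 𝕜) (X : A) :
    (∑ i, f i • E i) * X * (∑ j, g j • E j) = schurMul E (fun i j => f i * g j) X := by
  rw [Finset.sum_mul, Finset.sum_mul]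
  simp only [schurMul, Finset.mul_sum, smul_mul_assoc, mul_smul_comm, smul_smul, mul_assoc]
  exact Finset.sum_congr rfl fun i _ => Finset.sum_congr rfl fun j _ => by rw [mul_comm]

lemma schurMul_sub (a b : ι → ι → 𝕜) (X : A) :
    schurMul E a X - schurMul E b X = schurMul E (fun i j => a i j - b i j) X := by
  simp only [schurMul, ← Finset.sum_sub_distrib, sub_smul]

lemma schurMul_eq_zero {a : ι → ι → 𝕜} (ha : ∀ i j, a i j = 0) (X : A) :
    schurMul E a X = 0 := by
  simp [schurMul, ha]

lemma twiddle_compl (κ : ι → 𝕜) (s : Set 𝕜) (X : A) :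
    twiddle E κ sᶜ X = -twiddle E κ s X := by
  have hslope : ∀ a b : 𝕜,
      slope (sᶜ.indicator (1 : 𝕜 → 𝕜)) a b = -slope (s.indicator (1 : 𝕜 → 𝕜)) a b := by
    intro a b
    simp only [slope_def_field, Set.indicator_compl, Pi.sub_apply, Pi.one_apply]
    ring
  simp only [twiddle, schurMul, hslope, neg_smul, Finset.sum_neg_distrib]

namespace CompleteOrthogonalIdempotents

lemma sum_smul_mul (hE : CompleteOrthogonalIdempotents E) (f : ι → 𝕜) (j : ι) :
    (∑ i, f i • E i) * E j = f j • E j := by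
  classical
  simp [Finset.sum_mul, hE.mul_eq]

lemma mul_sum_smul (hE : CompleteOrthogonalIdempotents E) (f : ι → 𝕜) (j : ι) :
    E j * (∑ i, f i • E i) = f j • E j := by
  classical
  simp [Finset.mul_sum, hE.mul_eq]

lemma sum_smul_mul_sum_smul (hE : CompleteOrthogonalIdempotents E) (f g : ι → 𝕜) :
    (∑ i, f i • E i) * (∑ i, g i • E i) = ∑ i, (f i * g i) • E i := by
  simp only [Finset.mul_sum, mul_smul_comm, hE.sum_smul_mul, smul_smul, mul_comm]

lemma smul_one_eq_sum (hE : CompleteOrthogonalIdempotents E) (a : 𝕜) :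
    a • (1 : A) = ∑ i, a • E i := by
  rw [← Finset.smul_sum, hE.complete]

lemma inverse_sum_smul (hE : CompleteOrthogonalIdempotents E) {f : ι → 𝕜}
    (hf : ∀ i, f i ≠ 0) :
    Ring.inverse (∑ i, f i • E i) = ∑ i, (f i)⁻¹ • E i := by
  have hone : ∑ i, (1 : 𝕜) • E i = 1 := by rw [← hE.smul_one_eq_sum, one_smul]
  have hright : (∑ i, f i • E i) * ∑ i, (f i)⁻¹ • E i = 1 := by
    simp only [hE.sum_smul_mul_sum_smul, mul_inv_cancel₀ (hf _), hone]
  have hleft : (∑ i, (f i)⁻¹ • E i) * ∑ i, f i • E i = 1 := by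
    simp only [hE.sum_smul_mul_sum_smul, inv_mul_cancel₀ (hf _), hone]
  exact Ring.inverse_unit ⟨_, _, hright, hleft⟩

lemma inverse_sum_smul_sub_smul_one (hE : CompleteOrthogonalIdempotents E) {κ : ι → 𝕜}
    {z : 𝕜} (hz : ∀ i, κ i ≠ z) :
    Ring.inverse (∑ i, κ i • E i - z • 1) = ∑ i, (κ i - z)⁻¹ • E i := by
  rw [hE.smul_one_eq_sum, ← Finset.sum_sub_distrib]
  simp only [← sub_smul]
  exact hE.inverse_sum_smul fun i => sub_ne_zero.2 (hz i)

lemma mem_spectrum_sum_smul (hE : CompleteOrthogonalIdempotents E) (f : ι → 𝕜) {i : ι}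
    (hi : E i ≠ 0) : f i ∈ spectrum 𝕜 (∑ j, f j • E j) := by
  intro hunit
  apply hi
  have hann : E i * (algebraMap 𝕜 A (f i) - ∑ j, f j • E j) = 0 := by
    rw [Algebra.algebraMap_eq_smul_one, mul_sub, mul_smul_comm, mul_one, hE.mul_sum_smul,
      sub_self]
  exact hunit.mul_left_eq_zero.mp hann

lemma sum_smul_mul_schurMul (hE : CompleteOrthogonalIdempotents E) (f : ι → 𝕜)
    (a : ι → ι → 𝕜) (X : A) :
    (∑ i, f i • E i) * schurMul E a X = schurMul E (fun i j => f i * a i j) X := by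
  simp only [schurMul, Finset.mul_sum, mul_smul_comm, ← mul_assoc, hE.sum_smul_mul,
    smul_mul_assoc, smul_smul]
  exact Finset.sum_congr rfl fun i _ => Finset.sum_congr rfl fun j _ => by rw [mul_comm]

lemma schurMul_mul_sum_smul (hE : CompleteOrthogonalIdempotents E) (a : ι → ι → 𝕜) (X : A)
    (g : ι → 𝕜) :
    schurMul E a X * (∑ j, g j • E j) = schurMul E (fun i j => a i j * g j) X := by
  simp only [schurMul, Finset.sum_mul, smul_mul_assoc, mul_assoc, hE.mul_sum_smul,
    mul_smul_comm, smul_smul]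

lemma schurMul_one (hE : CompleteOrthogonalIdempotents E) (X : A) :
    schurMul E (fun _ _ => (1 : 𝕜)) X = X := by
  simp only [schurMul, one_smul, ← Finset.mul_sum, ← Finset.sum_mul, hE.complete, mul_one,
    one_mul]

lemma one_sub_spectralProj (hE : CompleteOrthogonalIdempotents E) (κ : ι → 𝕜) (s : Set 𝕜) :
    1 - spectralProj E κ s = spectralProj E κ sᶜ := by
  rw [← one_smul 𝕜 (1 : A), hE.smul_one_eq_sum, spectralProj, spectralProj,
    ← Finset.sum_sub_distrib]
  simp only [← sub_smul, Set.indicator_compl, Pi.sub_apply, Pi.one_apply]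

lemma spectralProj_mul_twiddle_mul_spectralProj (hE : CompleteOrthogonalIdempotents E)
    (κ : ι → 𝕜) (s : Set 𝕜) (X : A) :
    spectralProj E κ s * twiddle E κ s X * spectralProj E κ s = 0 := by
  rw [spectralProj, twiddle, hE.sum_smul_mul_schurMul, hE.schurMul_mul_sum_smul]
  refine schurMul_eq_zero (fun i j => ?_) X
  by_cases hi : κ i ∈ s <;> by_cases hj : κ j ∈ s <;> simp [hi, hj, slope_def_field]

lemma commutator_twiddle (hE : CompleteOrthogonalIdempotents E) (κ : ι → 𝕜) (s : Set 𝕜)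
    (X : A) :
    (∑ i, κ i • E i) * twiddle E κ s X - twiddle E κ s X * (∑ i, κ i • E i) =
      spectralProj E κ s * X - X * spectralProj E κ s := by
  conv_rhs => rw [← hE.schurMul_one (𝕜 := 𝕜) X]
  rw [twiddle, spectralProj, hE.sum_smul_mul_schurMul, hE.schurMul_mul_sum_smul,
    hE.sum_smul_mul_schurMul, hE.schurMul_mul_sum_smul, schurMul_sub, schurMul_sub]
  congr 1
  funext i j
  rw [mul_one, one_mul, mul_comm _ (κ j), ← sub_mul, ← smul_eq_mul, sub_smul_slope,
    vsub_eq_sub]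

end CompleteOrthogonalIdempotents

end SpectralResolution

section OffDiagonal

variable {R : Type*} [Ring R]

def IsOffDiagonal (P Y : R) : Prop :=
  P * Y * P = 0 ∧ (1 - P) * Y * (1 - P) = 0

lemma IsIdempotentElem.isOffDiagonal_commutator {P : R} (hP : IsIdempotentElem P) (D : R) :
    IsOffDiagonal P (D * P - P * D) := by
  constructor
  · calc P * (D * P - P * D) * P = P * D * (P * P) - P * P * D * P := by noncomm_ring
      _ = 0 := by rw [hP.eq, sub_self]
  · calc (1 - P) * (D * P - P * D) * (1 - P)
        = (1 - P) * D * (P * (1 - P)) - (1 - P) * P * D * (1 - P) := by noncomm_ring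
      _ = 0 := by rw [hP.mul_one_sub_self, hP.one_sub_mul_self]; simp

lemma IsOffDiagonal.commutator_corners {P K Y : R} (hK : IsOffDiagonal P K)
    (hY : IsOffDiagonal P Y) :
    P * (K * Y - Y * K) * (1 - P) = 0 ∧ (1 - P) * (K * Y - Y * K) * P = 0 := by
  obtain ⟨hKP, hKQ⟩ := hK
  obtain ⟨hYP, hYQ⟩ := hY
  constructor
  · calc P * (K * Y - Y * K) * (1 - P)
        = P * K * P * Y * (1 - P) + P * K * ((1 - P) * Y * (1 - P))
          - P * Y * P * K * (1 - P) - P * Y * ((1 - P) * K * (1 - P)) := by noncomm_ring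
      _ = 0 := by simp [hKP, hKQ, hYP, hYQ]
  · calc (1 - P) * (K * Y - Y * K) * P
        = (1 - P) * K * (P * Y * P) + (1 - P) * K * (1 - P) * Y * P
          - (1 - P) * Y * (P * K * P) - (1 - P) * Y * (1 - P) * K * P := by noncomm_ring
      _ = 0 := by simp [hKP, hKQ, hYP, hYQ]

lemma IsIdempotentElem.corners_commutator_add_commutator {P H D X Y : R}
    (hP : IsIdempotentElem P) (hY : IsOffDiagonal P Y) (hHY : H * Y - Y * H = P * X - X * P) :
    P * ((H + (D * P - P * D)) * Y - Y * (H + (D * P - P * D))) * (1 - P) = P * X * (1 - P) ∧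
      (1 - P) * ((H + (D * P - P * D)) * Y - Y * (H + (D * P - P * D))) * P =
        -((1 - P) * X * P) := by
  obtain ⟨hPQ, hQP⟩ := (hP.isOffDiagonal_commutator D).commutator_corners hY
  have hsplit : (H + (D * P - P * D)) * Y - Y * (H + (D * P - P * D)) =
      (P * X - X * P) + ((D * P - P * D) * Y - Y * (D * P - P * D)) := by
    rw [← hHY]
    noncomm_ring
  rw [hsplit]
  constructor
  · calc _ = P * P * X * (1 - P) - P * X * (P * (1 - P))
          + P * ((D * P - P * D) * Y - Y * (D * P - P * D)) * (1 - P) := by noncomm_ring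
      _ = P * X * (1 - P) := by rw [hP.eq, hP.mul_one_sub_self, hPQ]; simp
  · calc _ = (1 - P) * P * X * P - (1 - P) * X * (P * P)
          + (1 - P) * ((D * P - P * D) * Y - Y * (D * P - P * D)) * P := by noncomm_ring
      _ = -((1 - P) * X * P) := by rw [hP.eq, hP.one_sub_mul_self, hQP]; simp

end OffDiagonal

section CircleIntegral

variable {c w : ℂ} {r : ℝ}

lemma continuousOn_sub_inv_sphere (hw : w ∉ sphere c r) :
    ContinuousOn (fun z => (z - w)⁻¹) (sphere c r) :=
  (continuousOn_id.sub continuousOn_const).inv₀ fun z hz h =>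
    hw ((sub_eq_zero.1 h : z = w) ▸ hz)

lemma circleIntegral_sub_inv_eq_indicator (hr : 0 ≤ r) (hw : w ∉ sphere c r) :
    (∮ z in C(c, r), (z - w)⁻¹) = 2 * π * I * (ball c r).indicator 1 w := by
  by_cases hin : w ∈ ball c r
  · simp [circleIntegral.integral_sub_inv_of_mem_ball hin, hin]
  have hout : w ∉ closedBall c r := fun h =>
    h.lt_or_eq.elim (fun h' => hin (mem_ball.2 h')) (fun h' => hw (mem_sphere.2 h'))
  rw [Set.indicator_of_notMem hin, mul_zero]
  refine DiffContOnCl.circleIntegral_eq_zero hr ?_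
  refine ((differentiableOn_id.sub_const w).inv fun z hz => sub_ne_zero.2 hz).diffContOnCl_ball ?_
  exact fun z hz hzw => hout (hzw ▸ hz)

lemma circleIntegral_sub_inv_mul_sub_inv {a b : ℂ} (hr : 0 ≤ r) (ha : a ∉ sphere c r)
    (hb : b ∉ sphere c r) :
    (∮ z in C(c, r), (z - a)⁻¹ * (z - b)⁻¹) =
      2 * π * I * slope ((ball c r).indicator (1 : ℂ → ℂ)) b a := by
  rcases eq_or_ne a b with rfl | hab
  · have hsq : ∀ z, (z - a)⁻¹ * (z - a)⁻¹ = (z - a) ^ (-2 : ℤ) := fun z => by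
      rw [zpow_neg, zpow_two, mul_inv]
    simp only [hsq, circleIntegral.integral_sub_zpow_of_ne (by decide : (-2 : ℤ) ≠ -1),
      slope_same, mul_zero]
  have hpartial : EqOn (fun z => (z - a)⁻¹ * (z - b)⁻¹)
      (fun z => (a - b)⁻¹ * ((z - a)⁻¹ - (z - b)⁻¹)) (sphere c r) := fun z hz => by
    have : z - a ≠ 0 := fun h => ha (sub_eq_zero.1 h ▸ hz)
    have : z - b ≠ 0 := fun h => hb (sub_eq_zero.1 h ▸ hz)
    have : a - b ≠ 0 := sub_ne_zero.2 hab
    field_simp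
    ring
  rw [circleIntegral.integral_congr hr hpartial, circleIntegral.integral_const_mul,
    circleIntegral.integral_sub ((continuousOn_sub_inv_sphere ha).circleIntegrable hr)
      ((continuousOn_sub_inv_sphere hb).circleIntegrable hr),
    circleIntegral_sub_inv_eq_indicator hr ha, circleIntegral_sub_inv_eq_indicator hr hb,
    slope_def_field]
  field_simp

lemma circleIntegral_sum_smul_const {F ι : Type*} [NormedAddCommGroup F] [NormedSpace ℂ F]
    [CompleteSpace F] (s : Finset ι) {g : ι → ℂ → ℂ}
    (hg : ∀ i ∈ s, CircleIntegrable (g i) c r) (v : ι → F) :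
    (∮ z in C(c, r), ∑ i ∈ s, g i z • v i) = ∑ i ∈ s, (∮ z in C(c, r), g i z) • v i := by
  rw [circleIntegral.integral_fun_sum fun i hi =>
    (hg i hi).fun_smul_continuousOn continuousOn_const]
  simp only [circleIntegral.integral_smul_const]

end CircleIntegral

namespace CompleteOrthogonalIdempotents

variable {A ι : Type*} [NormedRing A] [NormedAlgebra ℂ A] [CompleteSpace A] [Fintype ι]
  {E : ι → A} {κ : ι → ℂ} {c : ℂ} {r : ℝ}

lemma circleIntegral_inverse_sub_smul_one (hE : CompleteOrthogonalIdempotents E) (hr : 0 ≤ r)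
    (hκ : ∀ i, κ i ∉ sphere c r) :
    (∮ z in C(c, r), Ring.inverse (∑ i, κ i • E i - z • 1)) =
      -(2 * π * I) • spectralProj E κ (ball c r) := by
  have hresolvent : EqOn (fun z => Ring.inverse (∑ i, κ i • E i - z • 1))
      (fun z => (-1 : ℂ) • ∑ i, (z - κ i)⁻¹ • E i) (sphere c r) := fun z hz => by
    beta_reduce
    rw [hE.inverse_sum_smul_sub_smul_one fun i (h : κ i = z) => hκ i (h ▸ hz), Finset.smul_sum]
    simp only [smul_smul, neg_one_mul, ← inv_neg, neg_sub]
  rw [circleIntegral.integral_congr hr hresolvent, circleIntegral.integral_smul,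
    circleIntegral_sum_smul_const _
      (fun i _ => (continuousOn_sub_inv_sphere (hκ i)).circleIntegrable hr),
    spectralProj, Finset.smul_sum, Finset.smul_sum]
  refine Finset.sum_congr rfl fun i _ => ?_
  rw [circleIntegral_sub_inv_eq_indicator hr (hκ i), smul_smul, smul_smul]
  congr 1
  ring

lemma circleIntegral_inverse_mul_mul_inverse (hE : CompleteOrthogonalIdempotents E)
    (hr : 0 ≤ r) (hκ : ∀ i, κ i ∉ sphere c r) (X : A) :
    (∮ z in C(c, r), Ring.inverse (∑ i, κ i • E i - z • 1) * X *
        Ring.inverse (∑ i, κ i • E i - z • 1)) =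
      (2 * π * I) • twiddle E κ (ball c r) X := by
  have hint : ∀ i j, CircleIntegrable (fun z => (z - κ i)⁻¹ * (z - κ j)⁻¹) c r := fun i j =>
    ((continuousOn_sub_inv_sphere (hκ i)).mul
      (continuousOn_sub_inv_sphere (hκ j))).circleIntegrable hr
  have hsandwich : EqOn (fun z => Ring.inverse (∑ i, κ i • E i - z • 1) * X *
        Ring.inverse (∑ i, κ i • E i - z • 1))
      (fun z => ∑ i, ∑ j, ((z - κ i)⁻¹ * (z - κ j)⁻¹) • (E i * X * E j)) (sphere c r) :=
    fun z hz => by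
    beta_reduce
    rw [hE.inverse_sum_smul_sub_smul_one fun i (h : κ i = z) => hκ i (h ▸ hz),
      sum_smul_mul_mul_sum_smul]
    have hsign : ∀ a b : ℂ, (a - z)⁻¹ * (b - z)⁻¹ = (z - a)⁻¹ * (z - b)⁻¹ := fun a b => by
      rw [← neg_mul_neg, ← inv_neg, ← inv_neg, neg_sub, neg_sub]
    simp only [schurMul, hsign]
  rw [circleIntegral.integral_congr hr hsandwich, circleIntegral.integral_fun_sum fun i _ =>
    CircleIntegrable.fun_sum _ fun j _ => (hint i j).fun_smul_continuousOn continuousOn_const]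
  simp only [circleIntegral_sum_smul_const _ (fun j _ => hint _ j),
    circleIntegral_sub_inv_mul_sub_inv hr (hκ _) (hκ _), twiddle, schurMul, Finset.smul_sum,
    smul_smul]

end CompleteOrthogonalIdempotents

lemma LinearMap.IsSymmetric.exists_eq_sum_smul_completeOrthogonalIdempotents {𝕜 V : Type*}
    [RCLike 𝕜] [NormedAddCommGroup V] [InnerProductSpace 𝕜 V] [FiniteDimensional 𝕜 V]
    {H : V →L[𝕜] V} (hH : (H : V →ₗ[𝕜] V).IsSymmetric) :
    ∃ (n : ℕ) (E : Fin n → V →L[𝕜] V) (κ : Fin n → 𝕜),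
      CompleteOrthogonalIdempotents E ∧ (∀ i, E i ≠ 0) ∧ H = ∑ i, κ i • E i := by
  let b := hH.eigenvectorBasis rfl
  have hb : Orthonormal 𝕜 b := b.orthonormal
  have hcomplete : ∑ i, rankOne 𝕜 (b i) (b i) = 1 := b.sum_rankOne_eq_id
  refine ⟨_, fun i => rankOne 𝕜 (b i) (b i), fun i => (hH.eigenvalues rfl i : 𝕜),
    ⟨⟨fun i => ?_, fun i j hij => ?_⟩, hcomplete⟩,
    fun i => rankOne_ne_zero (hb.ne_zero i) (hb.ne_zero i), ?_⟩
  · exact isIdempotentElem_rankOne_self (hb.1 i)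
  · simp [ContinuousLinearMap.mul_def, rankOne_comp_rankOne, hb.2 hij]
  · calc H = H * ∑ i, rankOne 𝕜 (b i) (b i) := by rw [hcomplete, mul_one]
      _ = _ := by
        refine (Finset.mul_sum _ _ _).trans (Finset.sum_congr rfl fun i _ => ?_)
        have hHb : H (b i) = (hH.eigenvalues rfl i : 𝕜) • b i := hH.apply_eigenvectorBasis rfl i
        rw [ContinuousLinearMap.mul_def, comp_rankOne, hHb, map_smul]
        rfl

theorem twiddle_operation_general
    {V : Type*} [NormedAddCommGroup V] [InnerProductSpace ℂ V] [FiniteDimensional ℂ V]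
    (H : V →L[ℂ] V) (hH : IsSelfAdjoint H)
    (m : ℕ) (lam : Fin m → ℝ)
    (P : V →L[ℂ] V)
    (hPidem : P ∘L P = P)
    (c : ℂ) (r : ℝ) (hr : 0 < r)
    (hin : ∀ j, ‖(lam j : ℂ) - c‖ < r)
    (hout : ∀ μ ∈ spectrum ℂ H, (∀ j, μ ≠ (lam j : ℂ)) → r < ‖μ - c‖)
    (hPint : P = (-(2 * (Real.pi : ℂ) * Complex.I)⁻¹) •
      circleIntegral (fun z => Ring.inverse (H - z • (1 : V →L[ℂ] V))) c r)
    (X : V →L[ℂ] V) :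
    let Q : V →L[ℂ] V := 1 - P
    let Xt : V →L[ℂ] V := (2 * (Real.pi : ℂ) * Complex.I)⁻¹ •
      circleIntegral (fun z =>
        Ring.inverse (H - z • (1 : V →L[ℂ] V)) ∘L X ∘L
          Ring.inverse (H - z • (1 : V →L[ℂ] V))) c r
    (P ∘L Xt ∘L P = 0 ∧ Q ∘L Xt ∘L Q = 0) ∧
    (H ∘L Xt - Xt ∘L H = P ∘L X - X ∘L P) ∧
    (∀ (Pfam Pfam' : ℝ → V →L[ℂ] V) (s₀ τ : ℝ), 0 < τ →
      (∀ s, IsSelfAdjoint (Pfam s)) → (∀ s, Pfam s ∘L Pfam s = Pfam s) →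
      (∀ s, HasDerivAt Pfam (Pfam' s) s) → Continuous Pfam' →
      Pfam s₀ = P →
      let HA : V →L[ℂ] V :=
        H + (Complex.I / (τ : ℂ)) • (Pfam' s₀ ∘L P - P ∘L Pfam' s₀)
      P ∘L (HA ∘L Xt - Xt ∘L HA) ∘L Q = P ∘L X ∘L Q ∧
      Q ∘L (HA ∘L Xt - Xt ∘L HA) ∘L P = -(Q ∘L X ∘L P)) := by
  intro Q Xt
  simp only [← ContinuousLinearMap.mul_def, ← mul_assoc]
  obtain ⟨n, E, κ, hE, hE0, rfl⟩ := hH.isSymmetric.exists_eq_sum_smul_completeOrthogonalIdempotents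
  have hκ : ∀ i, κ i ∉ sphere c r := fun i hi => by
    rw [mem_sphere_iff_norm] at hi
    by_cases hlam : ∃ j, κ i = lam j
    · obtain ⟨j, hj⟩ := hlam
      exact (hin j).ne (hj ▸ hi)
    · exact (hout _ (hE.mem_spectrum_sum_smul κ (hE0 i)) fun j h => hlam ⟨j, h⟩).ne' hi
  have hP : P = spectralProj E κ (ball c r) := by
    rw [hPint, hE.circleIntegral_inverse_sub_smul_one hr.le hκ, smul_smul, neg_mul_neg,
      inv_mul_cancel₀ two_pi_I_ne_zero, one_smul]
  have hXt : Xt = twiddle E κ (ball c r) X := by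
    simp only [Xt, ← ContinuousLinearMap.mul_def, ← mul_assoc,
      hE.circleIntegral_inverse_mul_mul_inverse hr.le hκ, smul_smul,
      inv_mul_cancel₀ two_pi_I_ne_zero, one_smul]
  have hPXtP : P * Xt * P = 0 := by
    rw [hP, hXt, hE.spectralProj_mul_twiddle_mul_spectralProj]
  have hQXtQ : Q * Xt * Q = 0 := by
    rw [show Q = 1 - P from rfl, hP, hXt, hE.one_sub_spectralProj, ← neg_neg (twiddle E κ _ X),
      ← twiddle_compl, mul_neg, neg_mul, hE.spectralProj_mul_twiddle_mul_spectralProj, neg_zero]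
  have hcomm : (∑ i, κ i • E i) * Xt - Xt * (∑ i, κ i • E i) = P * X - X * P := by
    rw [hP, hXt, hE.commutator_twiddle]
  refine ⟨⟨hPXtP, hQXtQ⟩, hcomm, fun Pfam Pfam' s₀ τ _ _ _ _ _ _ => ?_⟩
  rw [smul_sub, ← smul_mul_assoc, ← mul_smul_comm]
  exact IsIdempotentElem.corners_commutator_add_commutator hPidem ⟨hPXtP, hQXtQ⟩ hcomm

/-- **Twiddle operation (Lemma 2).**

`H` is a self-adjoint operator on a finite-dimensional complex inner product space,
`lam 1, …, lam m` are some of its eigenvalues, `P` the orthogonal projection onto the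
sum of the corresponding eigenspaces, and `Γ` (a positively oriented circle of center
`c` and radius `r`) encloses exactly these eigenvalues and no other point of the
spectrum, so that `P = −(2πi)⁻¹ ∮_Γ (H−z)⁻¹ dz`.  For a linear operator `X` define
`X̃ := (2πi)⁻¹ ∮_Γ (H−z)⁻¹ X (H−z)⁻¹ dz`.

Then (a) `P X̃ P = 0` and `Q X̃ Q = 0` with `Q := 1 − P`; (b) `[H, X̃] = PX − XP`; and
(c) for any continuously differentiable family of orthogonal projections `s ↦ Pfam s`
with `Pfam s₀ = P`, setting `H^A_τ := H + (i/τ)[Ṗ(s₀), P]`, one has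
`P [H^A_τ, X̃] Q = P X Q` and `Q [H^A_τ, X̃] P = − Q X P`. -/
theorem twiddle_operation
    {V : Type*} [NormedAddCommGroup V] [InnerProductSpace ℂ V] [FiniteDimensional ℂ V]
    (H : V →L[ℂ] V) (hH : IsSelfAdjoint H)
    (m : ℕ) (lam : Fin m → ℝ)
    (hlam : ∀ j, Module.End.HasEigenvalue (H : V →ₗ[ℂ] V) (lam j : ℂ))
    (P : V →L[ℂ] V)
    (hPsa : IsSelfAdjoint P) (hPidem : P ∘L P = P)
    (hPrange : ∀ v : V, P v = v ↔
      v ∈ ⨆ j : Fin m, Module.End.eigenspace (H : V →ₗ[ℂ] V) (lam j : ℂ))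
    (c : ℂ) (r : ℝ) (hr : 0 < r)
    (hin : ∀ j, ‖(lam j : ℂ) - c‖ < r)
    (hout : ∀ μ ∈ spectrum ℂ H, (∀ j, μ ≠ (lam j : ℂ)) → r < ‖μ - c‖)
    (hPint : P = (-(2 * (Real.pi : ℂ) * Complex.I)⁻¹) •
      circleIntegral (fun z => Ring.inverse (H - z • (1 : V →L[ℂ] V))) c r)
    (X : V →L[ℂ] V) :
    let Q : V →L[ℂ] V := 1 - P
    let Xt : V →L[ℂ] V := (2 * (Real.pi : ℂ) * Complex.I)⁻¹ •
      circleIntegral (fun z =>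
        Ring.inverse (H - z • (1 : V →L[ℂ] V)) ∘L X ∘L
          Ring.inverse (H - z • (1 : V →L[ℂ] V))) c r
    (P ∘L Xt ∘L P = 0 ∧ Q ∘L Xt ∘L Q = 0) ∧
    (H ∘L Xt - Xt ∘L H = P ∘L X - X ∘L P) ∧
    (∀ (Pfam Pfam' : ℝ → V →L[ℂ] V) (s₀ τ : ℝ), 0 < τ →
      (∀ s, IsSelfAdjoint (Pfam s)) → (∀ s, Pfam s ∘L Pfam s = Pfam s) →
      (∀ s, HasDerivAt Pfam (Pfam' s) s) → Continuous Pfam' →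
      Pfam s₀ = P →
      let HA : V →L[ℂ] V :=
        H + (Complex.I / (τ : ℂ)) • (Pfam' s₀ ∘L P - P ∘L Pfam' s₀)
      P ∘L (HA ∘L Xt - Xt ∘L HA) ∘L Q = P ∘L X ∘L Q ∧
      Q ∘L (HA ∘L Xt - Xt ∘L HA) ∘L P = -(Q ∘L X ∘L P)) :=
  twiddle_operation_general H hH m lam P hPidem c r hr hin hout hPint X
end

section
/- Derivative of the spectral projection (Lemma 7, first part): For every s, the derivative of the band spectral projection satisfies Ṗ(s) = (Ḣ(s))~, i.e., Ṗ(s) = −Σ_{j=1}^m ( P_j(s) Ḣ(s) R̂_{λ_j}(s) + R̂_{λ_j}(s) Ḣ(s) P_j(s) ). -/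
/-- **Derivative of the spectral projection (Lemma 7, first part).**

`H s` is a continuously differentiable family of self-adjoint operators (derivative
`H'`) on a finite-dimensional complex inner product space, `P s` a continuously
differentiable family of orthogonal projections (derivative `P'`) commuting with `H s`,
equal to the sum of the spectral projections `Pj s j` of `H s` onto the eigenvalues
`lam s j`, which are separated from the rest of the spectrum by a gap `g s > 0`.
`R s j` is the reduced resolvent of `H s` at `lam s j` (characterized by
`(H−λⱼ) R = R (H−λⱼ) = 1−P`, `P R = R P = 0`, i.e. `R̂_{λⱼ} = Σ_{μ∉band} (μ−λⱼ)⁻¹ Π_μ`).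

Then `Ṗ(s) = (Ḣ(s))~ = −Σⱼ ( Pⱼ Ḣ R̂_{λⱼ} + R̂_{λⱼ} Ḣ Pⱼ )`. -/
theorem derivative_of_spectral_projection
    {V : Type*} [NormedAddCommGroup V] [InnerProductSpace ℂ V] [FiniteDimensional ℂ V]
    (m : ℕ)
    (H H' P P' : ℝ → V →L[ℂ] V)
    (lam : ℝ → Fin m → ℝ) (g : ℝ → ℝ)
    (Pj R : ℝ → Fin m → V →L[ℂ] V)
    (hHsa : ∀ s ∈ Set.Icc (0:ℝ) 1, IsSelfAdjoint (H s))
    (hH' : ∀ s ∈ Set.Icc (0:ℝ) 1, HasDerivAt H (H' s) s)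
    (hH'c : ContinuousOn H' (Set.Icc (0:ℝ) 1))
    (hPsa : ∀ s ∈ Set.Icc (0:ℝ) 1, IsSelfAdjoint (P s))
    (hPidem : ∀ s ∈ Set.Icc (0:ℝ) 1, P s ∘L P s = P s)
    (hPH : ∀ s ∈ Set.Icc (0:ℝ) 1, H s ∘L P s = P s ∘L H s)
    (hP' : ∀ s ∈ Set.Icc (0:ℝ) 1, HasDerivAt P (P' s) s)
    (hP'c : ContinuousOn P' (Set.Icc (0:ℝ) 1))
    (hPjsa : ∀ s ∈ Set.Icc (0:ℝ) 1, ∀ j, IsSelfAdjoint (Pj s j))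
    (hPjidem : ∀ s ∈ Set.Icc (0:ℝ) 1, ∀ j, Pj s j ∘L Pj s j = Pj s j)
    (hPjne : ∀ s ∈ Set.Icc (0:ℝ) 1, ∀ j, Pj s j ≠ 0)
    (hPjeig : ∀ s ∈ Set.Icc (0:ℝ) 1, ∀ j, H s ∘L Pj s j = (lam s j : ℂ) • Pj s j)
    (hPjfull : ∀ s ∈ Set.Icc (0:ℝ) 1, ∀ j, ∀ v : V,
      H s v = (lam s j : ℂ) • v → Pj s j v = v)
    (hPsum : ∀ s ∈ Set.Icc (0:ℝ) 1, P s = ∑ j, Pj s j)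
    (hgpos : ∀ s ∈ Set.Icc (0:ℝ) 1, 0 < g s)
    (hgap : ∀ s ∈ Set.Icc (0:ℝ) 1, ∀ (μ : ℝ) (v : V), v ≠ 0 → H s v = (μ : ℂ) • v →
      (∀ j, μ ≠ lam s j) → ∀ j, g s ≤ |μ - lam s j|)
    (hRl : ∀ s ∈ Set.Icc (0:ℝ) 1, ∀ j,
      (H s - (lam s j : ℂ) • 1) ∘L R s j = 1 - P s)
    (hRr : ∀ s ∈ Set.Icc (0:ℝ) 1, ∀ j,
      R s j ∘L (H s - (lam s j : ℂ) • 1) = 1 - P s)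
    (hRP : ∀ s ∈ Set.Icc (0:ℝ) 1, ∀ j, P s ∘L R s j = 0 ∧ R s j ∘L P s = 0) :
    ∀ s ∈ Set.Icc (0:ℝ) 1,
      P' s = -(∑ j, (Pj s j ∘L H' s ∘L R s j + R s j ∘L H' s ∘L Pj s j)) := by
  intro s hs
  have hsU : UniqueDiffWithinAt ℝ (Set.Icc (0:ℝ) 1) s := (uniqueDiffOn_Icc one_pos) s hs
  set A := H s with hA
  set A' := H' s with hA'
  set Q := P s with hQdef
  set Q' := P' s with hQ'def
  -- basic algebraic relations
  have hQidem : Q * Q = Q := hPidem s hs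
  have hAQ : A * Q = Q * A := hPH s hs
  have heig : ∀ j, A * Pj s j = (lam s j : ℂ) • Pj s j := hPjeig s hs
  have heig' : ∀ j, Pj s j * A = (lam s j : ℂ) • Pj s j := by
    intro j
    have h1 := congrArg star (heig j)
    rw [star_mul, star_smul, (hHsa s hs).star_eq, (hPjsa s hs j).star_eq] at h1
    simpa [Complex.star_def, Complex.conj_ofReal] using h1
  have hRl' : ∀ j, (A - (lam s j : ℂ) • 1) * R s j = 1 - Q := hRl s hs
  have hRr' : ∀ j, R s j * (A - (lam s j : ℂ) • 1) = 1 - Q := hRr s hs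
  have hQR : ∀ j, Q * R s j = 0 := fun j => (hRP s hs j).1
  have hRQ : ∀ j, R s j * Q = 0 := fun j => (hRP s hs j).2
  -- P acts as identity on the band projections
  have f6a : ∀ j, Q * Pj s j = Pj s j := by
    intro j
    have hz : (A - (lam s j : ℂ) • 1) * Pj s j = 0 := by
      rw [sub_mul, smul_mul_assoc, one_mul, heig j, sub_self]
    have h : (1 - Q) * Pj s j = 0 := by
      rw [← hRr' j, mul_assoc, hz, mul_zero]
    rw [sub_mul, one_mul, sub_eq_zero] at h
    exact h.symm
  have f6b : ∀ j, Pj s j * Q = Pj s j := by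
    intro j
    have hz : Pj s j * (A - (lam s j : ℂ) • 1) = 0 := by
      rw [mul_sub, mul_smul_comm, mul_one, heig' j, sub_self]
    have h : Pj s j * (1 - Q) = 0 := by
      rw [← hRl' j, ← mul_assoc, hz, zero_mul]
    rw [mul_sub, mul_one, sub_eq_zero] at h
    exact h.symm
  have h1Qidem : (1 - Q) * (1 - Q) = 1 - Q := by
    rw [mul_sub, mul_one, sub_mul, one_mul, hQidem, sub_self, sub_zero]
  have hR1Q : ∀ j, R s j * (1 - Q) = R s j := by
    intro j; rw [mul_sub, mul_one, hRQ j, sub_zero]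
  -- derivative identities
  have f1 : Q' = Q' * Q + Q * Q' := by
    have h1 : HasDerivWithinAt (fun t => P t * P t) (Q' * Q + Q * Q') (Set.Icc (0:ℝ) 1) s :=
      (hP' s hs).hasDerivWithinAt.mul (hP' s hs).hasDerivWithinAt
    have h2 : HasDerivWithinAt P (Q' * Q + Q * Q') (Set.Icc (0:ℝ) 1) s :=
      h1.congr (fun t ht => (hPidem t ht).symm) (hPidem s hs).symm
    exact ((hP' s hs).hasDerivWithinAt.derivWithin hsU).symm.trans (h2.derivWithin hsU)
  have f2 : A' * Q + A * Q' = Q' * A + Q * A' := by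
    have h1 : HasDerivWithinAt (fun t => H t * P t) (A' * Q + A * Q') (Set.Icc (0:ℝ) 1) s :=
      (hH' s hs).hasDerivWithinAt.mul (hP' s hs).hasDerivWithinAt
    have h2 : HasDerivWithinAt (fun t => H t * P t) (Q' * A + Q * A') (Set.Icc (0:ℝ) 1) s :=
      ((hP' s hs).hasDerivWithinAt.mul (hH' s hs).hasDerivWithinAt).congr
        (fun t ht => hPH t ht) (hPH s hs)
    exact (h1.derivWithin hsU).symm.trans (h2.derivWithin hsU)
  -- auxiliary rewriting lemmas
  have hQ2X : ∀ X : V →L[ℂ] V, Q * (Q * X) = Q * X := by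
    intro X; rw [← mul_assoc, hQidem]
  have hQAX : ∀ X : V →L[ℂ] V, Q * (A * X) = A * (Q * X) := by
    intro X; rw [← mul_assoc, ← hAQ, mul_assoc]
  have heig'X : ∀ j, ∀ X : V →L[ℂ] V, Pj s j * (A * X) = (lam s j : ℂ) • (Pj s j * X) := by
    intro j X; rw [← mul_assoc, heig' j, smul_mul_assoc]
  have hPjQX : ∀ j, ∀ X : V →L[ℂ] V, Pj s j * (Q * X) = Pj s j * X := by
    intro j X; rw [← mul_assoc, f6b j]
  -- Q Q' Q = 0
  have hQQ'Q : Q * (Q' * Q) = 0 := by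
    have h : Q * (Q' * Q) = Q * ((Q' * Q + Q * Q') * Q) := by rw [← f1]
    have h2 : Q * ((Q' * Q + Q * Q') * Q) = Q * (Q' * Q) + Q * (Q' * Q) := by
      simp only [mul_add, add_mul, mul_assoc, hQidem, hQ2X]
    rw [h2] at h
    exact (left_eq_add.mp h)
  -- key identity, left version
  have key : ∀ j, (A - (lam s j : ℂ) • 1) * ((1 - Q) * (Q' * Pj s j))
      = -((1 - Q) * (A' * Pj s j)) := by
    intro j
    have key' : (A - (lam s j : ℂ) • 1) * ((1 - Q) * (Q' * Pj s j)) + (1 - Q) * (A' * Pj s j)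
        = (1 - Q) * ((A' * Q + A * Q') * Pj s j) - (1 - Q) * ((Q' * A + Q * A') * Pj s j) := by
      simp only [mul_add, add_mul, mul_sub, sub_mul, one_mul, mul_one, mul_assoc,
        smul_mul_assoc, mul_smul_comm, smul_add, smul_sub, heig, f6a, hQ2X, hQAX]
      abel
    rw [f2, sub_self] at key'
    exact eq_neg_of_add_eq_zero_left key'
  -- key identity, right version
  have key2 : ∀ j, (Pj s j * (Q' * (1 - Q))) * (A - (lam s j : ℂ) • 1)
      = -(Pj s j * (A' * (1 - Q))) := by
    intro j
    have key2' : (Pj s j * (Q' * (1 - Q))) * (A - (lam s j : ℂ) • 1) + Pj s j * (A' * (1 - Q))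
        = Pj s j * ((Q' * A + Q * A') * (1 - Q)) - Pj s j * ((A' * Q + A * Q') * (1 - Q)) := by
      simp only [mul_add, add_mul, mul_sub, sub_mul, one_mul, mul_one, mul_assoc,
        smul_mul_assoc, mul_smul_comm, smul_add, smul_sub, hAQ, heig'X, hPjQX, hQidem]
      abel
    rw [← f2, sub_self] at key2'
    exact eq_neg_of_add_eq_zero_left key2'
  -- resolve the keys
  have h1QR : ∀ j, (1 - Q) * R s j = R s j := by
    intro j; rw [sub_mul, one_mul, hQR j, sub_zero]
  have stepX : ∀ j, (1 - Q) * (Q' * Pj s j) = -(R s j * (A' * Pj s j)) := by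
    intro j
    have h5 := congrArg (fun X => R s j * X) (key j)
    simp only [mul_neg] at h5
    rw [← mul_assoc, hRr' j, ← mul_assoc, h1Qidem] at h5
    rwa [show R s j * ((1 - Q) * (A' * Pj s j)) = R s j * (A' * Pj s j) by
          rw [← mul_assoc, hR1Q j]] at h5
  have stepY : ∀ j, Pj s j * (Q' * (1 - Q)) = -(Pj s j * (A' * R s j)) := by
    intro j
    have h5 := congrArg (fun X => X * R s j) (key2 j)
    simp only [neg_mul] at h5
    rw [mul_assoc, hRl' j] at h5
    rw [mul_assoc, mul_assoc, h1Qidem] at h5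
    rwa [show (Pj s j * (A' * (1 - Q))) * R s j = Pj s j * (A' * R s j) by
          rw [mul_assoc, mul_assoc, h1QR j]] at h5
  -- assemble
  have decompR : Q' * Q = (1 - Q) * (Q' * Q) := by
    rw [sub_mul, one_mul, hQQ'Q, sub_zero]
  have decompL : Q * Q' = Q * (Q' * (1 - Q)) := by
    rw [mul_sub, mul_one, mul_sub, hQQ'Q, sub_zero]
  have hQsum : Q = ∑ j, Pj s j := hPsum s hs
  have sum1 : (1 - Q) * (Q' * Q) = -(∑ j, R s j * (A' * Pj s j)) := by
    nth_rewrite 2 [hQsum]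
    rw [Finset.mul_sum, Finset.mul_sum]
    rw [← Finset.sum_neg_distrib]
    exact Finset.sum_congr rfl fun j _ => stepX j
  have sum2 : Q * (Q' * (1 - Q)) = -(∑ j, Pj s j * (A' * R s j)) := by
    nth_rewrite 1 [hQsum]
    rw [Finset.sum_mul, ← Finset.sum_neg_distrib]
    exact Finset.sum_congr rfl fun j _ => stepY j
  calc Q' = Q' * Q + Q * Q' := f1
    _ = (1 - Q) * (Q' * Q) + Q * (Q' * (1 - Q)) := by rw [← decompR, ← decompL]
    _ = -(∑ j, R s j * (A' * Pj s j)) + -(∑ j, Pj s j * (A' * R s j)) := by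
        rw [sum1, sum2]
    _ = -(∑ j, (Pj s j ∘L A' ∘L R s j + R s j ∘L A' ∘L Pj s j)) := by
        rw [← neg_add, ← Finset.sum_add_distrib]
        congr 1
        refine Finset.sum_congr rfl fun j _ => ?_
        show R s j * (A' * Pj s j) + Pj s j * (A' * R s j)
            = Pj s j * A' * R s j + R s j * A' * Pj s j
        rw [mul_assoc, mul_assoc]
        abel
end

section
/- Norm bound on the twiddle (Lemma 8): For every linear operator X on V, ‖X̃‖ ≤ √m · ‖X‖ / g, where ‖·‖ is the operator norm, m is the number of eigenvalues in the band, and g is the spectral gap. -/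
/-!
For a vector `v`, the twiddle applied to `v` splits as `a + b` with
`a = Σⱼ Pⱼ X R̂ⱼ v` in the range of the band projections and `b = Σⱼ R̂ⱼ X Pⱼ v` in the range
of the complementary ones, so `‖X̃ v‖² = ‖a‖² + ‖b‖²`. Each `R̂ⱼ` acts on the complementary
components with weights of modulus at most `1/g`, hence `‖R̂ⱼ w‖² ≤ g⁻² ‖Q w‖²` with `Q` the
complementary projection. The `m` summands of `a` are mutually orthogonal, giving
`‖a‖² ≤ m g⁻² ‖X‖² ‖Q v‖²`, while the triangle and Cauchy–Schwarz inequalities give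
`‖b‖² ≤ m g⁻² ‖X‖² ‖P v‖²`. Since `‖P v‖² + ‖Q v‖² ≤ ‖v‖²`, the bound follows.
-/

open Finset
open scoped InnerProductSpace

section

variable {𝕜 E : Type*} [RCLike 𝕜] [NormedAddCommGroup E] [InnerProductSpace 𝕜 E]

theorem norm_sum_sq_of_pairwise_inner_eq_zero {ι : Type*} (s : Finset ι) (u : ι → E)
    (h : (s : Set ι).Pairwise fun i j => ⟪u i, u j⟫_𝕜 = 0) :
    ‖∑ i ∈ s, u i‖ ^ 2 = ∑ i ∈ s, ‖u i‖ ^ 2 := by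
  have key : ⟪∑ i ∈ s, u i, ∑ i ∈ s, u i⟫_𝕜 = ∑ i ∈ s, ⟪u i, u i⟫_𝕜 := by
    rw [sum_inner]
    refine sum_congr rfl fun i hi => ?_
    rw [inner_sum, sum_eq_single_of_mem i hi fun j hj hji => h hi hj hji.symm]
  simp only [inner_self_eq_norm_sq_to_K] at key
  exact_mod_cast key

namespace ContinuousLinearMap

theorem inner_apply_apply_eq_zero_of_comp_eq_zero {A B : E →L[𝕜] E}
    (hA : (A : E →ₗ[𝕜] E).IsSymmetric) (hAB : A ∘L B = 0) (v w : E) : ⟪A v, B w⟫_𝕜 = 0 := by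
  rw [show ⟪A v, B w⟫_𝕜 = ⟪v, A (B w)⟫_𝕜 from hA v (B w), ← comp_apply, hAB, zero_apply,
    inner_zero_right]

variable {ι : Type*} {P : ι → E →L[𝕜] E}
  (hsym : ∀ i, (P i : E →ₗ[𝕜] E).IsSymmetric) (horth : Pairwise fun i j => P i ∘L P j = 0)
include hsym horth

theorem inner_apply_apply_eq_zero_of_ne {i j : ι} (hij : i ≠ j) (v w : E) :
    ⟪P i v, P j w⟫_𝕜 = 0 :=
  inner_apply_apply_eq_zero_of_comp_eq_zero (hsym i) (horth hij) v w

theorem norm_sum_apply_sq {κ : Type*} {b : κ → ι} (hb : b.Injective) (s : Finset κ) (w : κ → E) :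
    ‖∑ j ∈ s, P (b j) (w j)‖ ^ 2 = ∑ j ∈ s, ‖P (b j) (w j)‖ ^ 2 :=
  norm_sum_sq_of_pairwise_inner_eq_zero s _ fun _ _ _ _ hjk =>
    inner_apply_apply_eq_zero_of_ne hsym horth (hb.ne hjk) _ _

theorem sum_norm_apply_sq [Fintype ι] (hsum : ∑ i, P i = 1) (v : E) :
    ∑ i, ‖P i v‖ ^ 2 = ‖v‖ ^ 2 := by
  conv_rhs => rw [← one_apply_eq_self (F := E →L[𝕜] E) v, ← hsum, _root_.sum_apply]
  exact (norm_sum_apply_sq hsym horth Function.injective_id _ _).symm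

theorem sum_norm_apply_sq_le [Fintype ι] (hsum : ∑ i, P i = 1) (s : Finset ι) (v : E) :
    ∑ i ∈ s, ‖P i v‖ ^ 2 ≤ ‖v‖ ^ 2 :=
  sum_norm_apply_sq hsym horth hsum v ▸
    sum_le_sum_of_subset_of_nonneg (subset_univ s) fun _ _ _ => sq_nonneg _

theorem norm_apply_le [Fintype ι] (hsum : ∑ i, P i = 1) (i : ι) (v : E) : ‖P i v‖ ≤ ‖v‖ := by
  have := sum_norm_apply_sq_le hsym horth hsum {i} v
  rw [sum_singleton] at this
  exact (sq_le_sq₀ (norm_nonneg _) (norm_nonneg _)).mp this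

theorem inner_apply_sum_smul_apply_eq_zero {k : ι} {S : Finset ι} (hk : k ∉ S) (c : ι → 𝕜)
    (x y : E) : ⟪P k x, (∑ i ∈ S, c i • P i) y⟫_𝕜 = 0 := by
  simp only [_root_.sum_apply, smul_apply, inner_sum, inner_smul_right]
  exact sum_eq_zero fun i hi =>
    by rw [inner_apply_apply_eq_zero_of_ne hsym horth (ne_of_mem_of_not_mem hi hk).symm, mul_zero]

theorem norm_sum_smul_apply_sq_le {S : Finset ι} {c : ι → 𝕜} {C : ℝ} (hc : ∀ i ∈ S, ‖c i‖ ≤ C)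
    (w : E) : ‖(∑ i ∈ S, c i • P i) w‖ ^ 2 ≤ C ^ 2 * ∑ i ∈ S, ‖P i w‖ ^ 2 := by
  have happly : (∑ i ∈ S, c i • P i) w = ∑ i ∈ S, P i (c i • w) := by
    simp only [_root_.sum_apply, smul_apply, map_smul]
  calc ‖(∑ i ∈ S, c i • P i) w‖ ^ 2 = ∑ i ∈ S, ‖P i (c i • w)‖ ^ 2 := by
        rw [happly]; exact norm_sum_apply_sq hsym horth Function.injective_id S _
    _ ≤ ∑ i ∈ S, C ^ 2 * ‖P i w‖ ^ 2 := by
        refine sum_le_sum fun i hi => ?_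
        rw [map_smul, norm_smul, mul_pow]
        have := hc i hi
        gcongr
    _ = C ^ 2 * ∑ i ∈ S, ‖P i w‖ ^ 2 := (mul_sum _ _ _).symm

theorem norm_sum_smul_apply_le [Fintype ι] (hsum : ∑ i, P i = 1) {S : Finset ι} {c : ι → 𝕜}
    {C : ℝ} (hC : 0 ≤ C) (hc : ∀ i ∈ S, ‖c i‖ ≤ C) (w : E) :
    ‖(∑ i ∈ S, c i • P i) w‖ ≤ C * ‖w‖ := by
  refine (sq_le_sq₀ (norm_nonneg _) (by positivity)).mp ?_
  calc ‖(∑ i ∈ S, c i • P i) w‖ ^ 2 ≤ C ^ 2 * ∑ i ∈ S, ‖P i w‖ ^ 2 :=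
        norm_sum_smul_apply_sq_le hsym horth hc w
    _ ≤ C ^ 2 * ‖w‖ ^ 2 := by gcongr; exact sum_norm_apply_sq_le hsym horth hsum S w
    _ = (C * ‖w‖) ^ 2 := (mul_pow _ _ _).symm

variable {κ : Type*} [Fintype κ] {b : κ → ι} {S : Finset ι} {c : κ → ι → 𝕜} {C : ℝ}

theorem inner_sum_apply_sum_sum_smul_apply_eq_zero (hS : ∀ i ∈ S, ∀ j, b j ≠ i) (x y : κ → E) :
    ⟪∑ j, P (b j) (x j), ∑ j, (∑ i ∈ S, c j i • P i) (y j)⟫_𝕜 = 0 := by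
  simp only [sum_inner, inner_sum]
  exact sum_eq_zero fun _ _ => sum_eq_zero fun _ _ =>
    inner_apply_sum_smul_apply_eq_zero hsym horth (fun h => hS _ h _ rfl) _ _ _

variable [Fintype ι] (hsum : ∑ i, P i = 1)
include hsum

theorem sum_norm_apply_sq_add_sum_norm_apply_sq_le (hb : b.Injective)
    (hS : ∀ i ∈ S, ∀ j, b j ≠ i) (v : E) :
    ∑ j, ‖P (b j) v‖ ^ 2 + ∑ i ∈ S, ‖P i v‖ ^ 2 ≤ ‖v‖ ^ 2 := by
  have hdisj : Disjoint (univ.map ⟨b, hb⟩) S := disjoint_left.mpr fun i hi hiS => by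
    obtain ⟨j, -, rfl⟩ := mem_map.mp hi
    exact hS _ hiS j rfl
  simpa only [sum_disjUnion, sum_map, Function.Embedding.coeFn_mk] using
    sum_norm_apply_sq_le hsym horth hsum ((univ.map ⟨b, hb⟩).disjUnion S hdisj) v

theorem norm_sum_apply_comp_sum_smul_apply_sq_le (hb : b.Injective)
    (hc : ∀ j, ∀ i ∈ S, ‖c j i‖ ≤ C) (X : E →L[𝕜] E) (v : E) :
    ‖∑ j, P (b j) (X ((∑ i ∈ S, c j i • P i) v))‖ ^ 2 ≤
      Fintype.card κ * (C ^ 2 * ‖X‖ ^ 2 * ∑ i ∈ S, ‖P i v‖ ^ 2) := by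
  rw [norm_sum_apply_sq hsym horth hb, ← card_univ, ← nsmul_eq_mul, ← sum_const]
  refine sum_le_sum fun j _ => ?_
  calc ‖P (b j) (X ((∑ i ∈ S, c j i • P i) v))‖ ^ 2
      ≤ (‖X‖ * ‖(∑ i ∈ S, c j i • P i) v‖) ^ 2 := by
        gcongr
        exact (norm_apply_le hsym horth hsum _ _).trans (X.le_opNorm _)
    _ ≤ ‖X‖ ^ 2 * (C ^ 2 * ∑ i ∈ S, ‖P i v‖ ^ 2) := by
        rw [mul_pow]
        gcongr
        exact norm_sum_smul_apply_sq_le hsym horth (hc j) v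
    _ = C ^ 2 * ‖X‖ ^ 2 * ∑ i ∈ S, ‖P i v‖ ^ 2 := by ring

theorem norm_sum_sum_smul_apply_comp_apply_sq_le (hC : 0 ≤ C)
    (hc : ∀ j, ∀ i ∈ S, ‖c j i‖ ≤ C) (X : E →L[𝕜] E) (v : E) :
    ‖∑ j, (∑ i ∈ S, c j i • P i) (X (P (b j) v))‖ ^ 2 ≤
      Fintype.card κ * (C ^ 2 * ‖X‖ ^ 2 * ∑ j, ‖P (b j) v‖ ^ 2) := by
  have hnorm : ‖∑ j, (∑ i ∈ S, c j i • P i) (X (P (b j) v))‖ ≤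
      C * ‖X‖ * ∑ j, ‖P (b j) v‖ := by
    rw [mul_sum]
    refine (norm_sum_le _ _).trans (sum_le_sum fun j _ => ?_)
    calc ‖(∑ i ∈ S, c j i • P i) (X (P (b j) v))‖ ≤ C * ‖X (P (b j) v)‖ :=
          norm_sum_smul_apply_le hsym horth hsum hC (hc j) _
      _ ≤ C * (‖X‖ * ‖P (b j) v‖) := by gcongr; exact X.le_opNorm _
      _ = C * ‖X‖ * ‖P (b j) v‖ := (mul_assoc _ _ _).symm
  calc _ ≤ (C * ‖X‖ * ∑ j, ‖P (b j) v‖) ^ 2 := by gcongr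
    _ = C ^ 2 * ‖X‖ ^ 2 * (∑ j, ‖P (b j) v‖) ^ 2 := by ring
    _ ≤ C ^ 2 * ‖X‖ ^ 2 * (Fintype.card κ * ∑ j, ‖P (b j) v‖ ^ 2) := by
        gcongr; exact sq_sum_le_card_mul_sum_sq
    _ = _ := by ring

theorem norm_sum_comp_comp_add_comp_comp_le (hb : b.Injective) (hS : ∀ i ∈ S, ∀ j, b j ≠ i)
    (hC : 0 ≤ C) (hc : ∀ j, ∀ i ∈ S, ‖c j i‖ ≤ C) (X : E →L[𝕜] E) :
    ‖∑ j, (P (b j) ∘L X ∘L (∑ i ∈ S, c j i • P i) + (∑ i ∈ S, c j i • P i) ∘L X ∘L P (b j))‖ ≤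
      √(Fintype.card κ) * C * ‖X‖ := by
  refine opNorm_le_bound _ (by positivity) fun v => ?_
  rw [_root_.sum_apply]
  simp only [add_apply, comp_apply, sum_add_distrib]
  refine (sq_le_sq₀ (norm_nonneg _) (by positivity)).mp ?_
  calc _ = ‖∑ j, P (b j) (X ((∑ i ∈ S, c j i • P i) v))‖ ^ 2 +
        ‖∑ j, (∑ i ∈ S, c j i • P i) (X (P (b j) v))‖ ^ 2 := by
        simp only [sq]
        exact norm_add_sq_eq_norm_sq_add_norm_sq_of_inner_eq_zero _ _
          (inner_sum_apply_sum_sum_smul_apply_eq_zero hsym horth hS _ _)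
    _ ≤ Fintype.card κ * (C ^ 2 * ‖X‖ ^ 2 * ∑ i ∈ S, ‖P i v‖ ^ 2) +
        Fintype.card κ * (C ^ 2 * ‖X‖ ^ 2 * ∑ j, ‖P (b j) v‖ ^ 2) :=
        add_le_add (norm_sum_apply_comp_sum_smul_apply_sq_le hsym horth hsum hb hc X v)
          (norm_sum_sum_smul_apply_comp_apply_sq_le hsym horth hsum hC hc X v)
    _ = Fintype.card κ * C ^ 2 * ‖X‖ ^ 2 * (∑ j, ‖P (b j) v‖ ^ 2 + ∑ i ∈ S, ‖P i v‖ ^ 2) := by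
        ring
    _ ≤ Fintype.card κ * C ^ 2 * ‖X‖ ^ 2 * ‖v‖ ^ 2 := by
        gcongr; exact sum_norm_apply_sq_add_sum_norm_apply_sq_le hsym horth hsum hb hS v
    _ = (√(Fintype.card κ) * C * ‖X‖ * ‖v‖) ^ 2 := by
        rw [mul_pow, mul_pow, mul_pow, Real.sq_sqrt (Nat.cast_nonneg _)]

end ContinuousLinearMap

end

/-- `Pi (ι j)` is the band projection `Pⱼ`, and the inner sums over the indices outside the band
are the reduced resolvents `R̂_{λⱼ}`. -/
theorem twiddle_norm_bound_general
    {V : Type*} [NormedAddCommGroup V] [InnerProductSpace ℂ V] [FiniteDimensional ℂ V]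
    (N : ℕ) (μs : Fin N → ℝ) (Pi : Fin N → V →L[ℂ] V)
    (hPisa : ∀ i, IsSelfAdjoint (Pi i))
    (hPiorth : ∀ i i', i ≠ i' → Pi i ∘L Pi i' = 0)
    (hPisum : ∑ i, Pi i = 1)
    (m : ℕ) (ι : Fin m → Fin N) (hι : Function.Injective ι)
    (g : ℝ) (hg : 0 < g)
    (hgap : ∀ i, (∀ j, ι j ≠ i) → ∀ j, g ≤ |μs i - μs (ι j)|) :
    ∀ X : V →L[ℂ] V,
      ‖-(∑ j, (Pi (ι j) ∘L X ∘L
            (∑ i ∈ Finset.univ.filter (fun i => ∀ j', ι j' ≠ i),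
              (((μs i : ℂ) - (μs (ι j) : ℂ))⁻¹) • Pi i)
          + (∑ i ∈ Finset.univ.filter (fun i => ∀ j', ι j' ≠ i),
              (((μs i : ℂ) - (μs (ι j) : ℂ))⁻¹) • Pi i) ∘L X ∘L Pi (ι j)))‖
        ≤ Real.sqrt m * ‖X‖ / g := by
  intro X
  have hcoef : ∀ j, ∀ i ∈ Finset.univ.filter (fun i => ∀ j', ι j' ≠ i),
      ‖((μs i : ℂ) - (μs (ι j) : ℂ))⁻¹‖ ≤ g⁻¹ := fun j i hi => by
    rw [norm_inv, ← Complex.ofReal_sub, Complex.norm_real, Real.norm_eq_abs]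
    exact inv_anti₀ hg (hgap i (mem_filter.mp hi).2 j)
  have hbound := ContinuousLinearMap.norm_sum_comp_comp_add_comp_comp_le
    (fun i => ContinuousLinearMap.isSelfAdjoint_iff_isSymmetric.mp (hPisa i)) hPiorth hPisum hι
    (fun i hi => (mem_filter.mp hi).2) (inv_nonneg.mpr hg.le) hcoef X
  rw [norm_neg]
  simpa only [Fintype.card_fin, mul_right_comm _ g⁻¹, div_eq_mul_inv] using hbound

/-- **Norm bound on the twiddle (Lemma 8).**

`H` is a self-adjoint operator on a finite-dimensional complex inner product space with
spectral decomposition `H = Σᵢ μs i • Pi i` (`Pi i` orthogonal spectral projections,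
pairwise orthogonal, summing to `1`, distinct eigenvalues `μs i`).  The band consists of
the `m` eigenvalues `μs (ι j)` (`ι` injective), with spectral projections
`Pⱼ = Pi (ι j)`, and the spectral gap satisfies `g ≤ |μ − λⱼ|` for every eigenvalue `μ`
outside the band, `g > 0`.  With the reduced resolvent
`R̂_{λⱼ} = Σ_{i ∉ range ι} (μs i − μs (ι j))⁻¹ • Pi i` and the twiddle
`X̃ := −Σⱼ ( Pⱼ X R̂_{λⱼ} + R̂_{λⱼ} X Pⱼ )`, one has `‖X̃‖ ≤ √m ‖X‖ / g`. -/
theorem twiddle_norm_bound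
    {V : Type*} [NormedAddCommGroup V] [InnerProductSpace ℂ V] [FiniteDimensional ℂ V]
    (H : V →L[ℂ] V) (hH : IsSelfAdjoint H)
    (N : ℕ) (μs : Fin N → ℝ) (Pi : Fin N → V →L[ℂ] V)
    (hμinj : Function.Injective μs)
    (hPisa : ∀ i, IsSelfAdjoint (Pi i))
    (hPiidem : ∀ i, Pi i ∘L Pi i = Pi i)
    (hPine : ∀ i, Pi i ≠ 0)
    (hPiorth : ∀ i i', i ≠ i' → Pi i ∘L Pi i' = 0)
    (hPisum : ∑ i, Pi i = 1)
    (hHspec : H = ∑ i, (μs i : ℂ) • Pi i)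
    (m : ℕ) (ι : Fin m → Fin N) (hι : Function.Injective ι)
    (g : ℝ) (hg : 0 < g)
    (hgap : ∀ i, (∀ j, ι j ≠ i) → ∀ j, g ≤ |μs i - μs (ι j)|) :
    ∀ X : V →L[ℂ] V,
      ‖-(∑ j, (Pi (ι j) ∘L X ∘L
            (∑ i ∈ Finset.univ.filter (fun i => ∀ j', ι j' ≠ i),
              (((μs i : ℂ) - (μs (ι j) : ℂ))⁻¹) • Pi i)
          + (∑ i ∈ Finset.univ.filter (fun i => ∀ j', ι j' ≠ i),
              (((μs i : ℂ) - (μs (ι j) : ℂ))⁻¹) • Pi i) ∘L X ∘L Pi (ι j)))‖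
        ≤ Real.sqrt m * ‖X‖ / g :=
  twiddle_norm_bound_general N μs Pi hPisa hPiorth hPisum m ι hι g hg hgap
end

section
/- Second-order gap bounds (Lemma 9, parts 3 and 4): For every s, ‖Q(s) P̈(s) P(s)‖ ≤ √m · ‖Ḧ(s)‖ / g(s) + 4m · ‖Ḣ(s)‖² / g(s)², and ‖Q(s) (d/ds (Ṗ)~)(s) P(s)‖ ≤ √m · ‖Q(s)P̈(s)P(s)‖ / g(s) + 2m · ‖Ḣ(s)‖ ‖Ṗ(s)‖ / g(s)² ≤ m ‖Ḧ(s)‖ / g(s)² + 6 m^{3/2} ‖Ḣ(s)‖² / g(s)³. -/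
open scoped InnerProductSpace ComplexConjugate

section aux
variable {V : Type*} [NormedAddCommGroup V] [InnerProductSpace ℂ V] [FiniteDimensional ℂ V]

local notation "⟪" x ", " y "⟫" => @inner ℂ _ _ x y

lemma aux_inner_proj (p : V →L[ℂ] V) (hsa : IsSelfAdjoint p) (hidem : p ∘L p = p) (v : V) :
    ⟪v, p v⟫ = (‖p v‖ : ℂ) ^ 2 := by
  have hsym := ContinuousLinearMap.isSelfAdjoint_iff_isSymmetric.mp hsa
  have h1 : ⟪p v, p v⟫ = ⟪v, p (p v)⟫ := hsym v (p v)
  have h2 : p (p v) = p v := by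
    conv_rhs => rw [← hidem]
    rfl
  rw [h2] at h1
  rw [← h1, inner_self_eq_norm_sq_to_K]
  norm_num

lemma aux_proj_norm_apply_le (p : V →L[ℂ] V) (hsa : IsSelfAdjoint p) (hidem : p ∘L p = p)
    (v : V) : ‖p v‖ ≤ ‖v‖ := by
  rcases eq_or_ne (p v) 0 with h | h
  · simp [h]
  · have h1 : (‖p v‖ : ℝ) ^ 2 = Complex.re ⟪v, p v⟫ := by
      rw [aux_inner_proj p hsa hidem v]
      simp [pow_two, Complex.ofReal_mul]
    have h2 : Complex.re ⟪v, p v⟫ ≤ ‖v‖ * ‖p v‖ := by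
      calc Complex.re ⟪v, p v⟫ ≤ ‖⟪v, p v⟫‖ := Complex.re_le_norm _
        _ ≤ ‖v‖ * ‖p v‖ := norm_inner_le_norm _ _
    have h3 : 0 < ‖p v‖ := norm_pos_iff.mpr h
    nlinarith [h3]

lemma aux_proj_norm_le_one (p : V →L[ℂ] V) (hsa : IsSelfAdjoint p) (hidem : p ∘L p = p) :
    ‖p‖ ≤ 1 := by
  refine ContinuousLinearMap.opNorm_le_bound p zero_le_one (fun v => ?_)
  simpa using aux_proj_norm_apply_le p hsa hidem v

end aux

section aux2
variable {V : Type*} [NormedAddCommGroup V] [InnerProductSpace ℂ V] [FiniteDimensional ℂ V]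
local notation "⟪" x ", " y "⟫" => @inner ℂ _ _ x y

variable {m : ℕ} {A p : V →L[ℂ] V} {π : Fin m → V →L[ℂ] V} {lam : Fin m → ℝ}

-- symmetric inner identity
lemma aux_sym (hsa : IsSelfAdjoint A) (x y : V) : ⟪A x, y⟫ = ⟪x, A y⟫ :=
  (ContinuousLinearMap.isSelfAdjoint_iff_isSymmetric.mp hsa) x y

lemma aux_lam_inj
    (hpsa : IsSelfAdjoint p) (hpidem : p ∘L p = p)
    (hπsa : ∀ j, IsSelfAdjoint (π j)) (hπidem : ∀ j, π j ∘L π j = π j)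
    (hπne : ∀ j, π j ≠ 0)
    (hπeig : ∀ j, A ∘L π j = (lam j : ℂ) • π j)
    (hπfull : ∀ j, ∀ v : V, A v = (lam j : ℂ) • v → π j v = v)
    (hsum : p = ∑ j, π j) : Function.Injective lam := by
  intro j k hjk
  by_contra hne
  obtain ⟨w, hw⟩ : ∃ w, π j w ≠ 0 := by
    by_contra h
    push_neg at h
    exact hπne j (ContinuousLinearMap.ext fun w => by simpa using h w)
  set v := π j w with hv
  have hAv : A v = (lam j : ℂ) • v := by
    have := congrArg (fun T => T w) (hπeig j)
    simpa using this
  have hjv : π j v = v := hπfull j v hAv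
  have hkv : π k v = v := hπfull k v (by rw [← hjk]; exact hAv)
  -- each term nonneg
  have hterm : ∀ i, (Complex.re ⟪v, π i v⟫) = ‖π i v‖ ^ 2 := by
    intro i
    have := aux_inner_proj (π i) (hπsa i) (hπidem i) v
    rw [this]
    simp [pow_two]
  have hsumv : Complex.re ⟪v, p v⟫ = ∑ i, ‖π i v‖ ^ 2 := by
    rw [hsum]
    rw [show ((∑ i, π i) v) = ∑ i, π i v from by simp]
    rw [inner_sum]
    rw [Complex.re_sum]
    exact Finset.sum_congr rfl fun i _ => hterm i
  have hp2 : Complex.re ⟪v, p v⟫ = ‖p v‖ ^ 2 := by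
    have := aux_inner_proj p hpsa hpidem v
    rw [this]; simp [pow_two]
  have hple : ‖p v‖ ≤ ‖v‖ := aux_proj_norm_apply_le p hpsa hpidem v
  have hge : (2:ℝ) * ‖v‖ ^ 2 ≤ ∑ i, ‖π i v‖ ^ 2 := by
    have h2 : ‖π j v‖ ^ 2 + ‖π k v‖ ^ 2 ≤ ∑ i, ‖π i v‖ ^ 2 := by
      refine Finset.add_le_sum (f := fun i => ‖π i v‖ ^ 2) (fun i _ => by positivity) 
        (Finset.mem_univ j) (Finset.mem_univ k) hne
    rw [hjv, hkv] at h2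
    linarith
  have hvpos : 0 < ‖v‖ := norm_pos_iff.mpr hw
  nlinarith [hple, norm_nonneg (p v), norm_nonneg v]

end aux2
section aux3
variable {V : Type*} [NormedAddCommGroup V] [InnerProductSpace ℂ V] [FiniteDimensional ℂ V]
local notation "⟪" x ", " y "⟫" => @inner ℂ _ _ x y

variable {m : ℕ} {A p : V →L[ℂ] V} {π : Fin m → V →L[ℂ] V} {lam : Fin m → ℝ}

lemma aux_inner_eig_orth (hAsa : IsSelfAdjoint A) {μ ν : ℝ} (hμν : μ ≠ ν) {x y : V}
    (hx : A x = (μ : ℂ) • x) (hy : A y = (ν : ℂ) • y) : ⟪x, y⟫ = 0 := by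
  have h1 : ⟪A x, y⟫ = ⟪x, A y⟫ := aux_sym hAsa x y
  rw [hx, hy, inner_smul_left, inner_smul_right] at h1
  have h2 : ((μ : ℂ) - ν) * ⟪x, y⟫ = 0 := by
    rw [sub_mul]
    rw [Complex.conj_ofReal] at h1
    rw [h1]; ring
  rcases mul_eq_zero.mp h2 with h | h
  · exfalso
    apply hμν
    have := sub_eq_zero.mp h
    exact_mod_cast this
  · exact h

lemma aux_pi_orth (hAsa : IsSelfAdjoint A)
    (hπsa : ∀ j, IsSelfAdjoint (π j)) (hπidem : ∀ j, π j ∘L π j = π j)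
    (hπeig : ∀ j, A ∘L π j = (lam j : ℂ) • π j)
    (hlam : Function.Injective lam)
    {j k : Fin m} (hjk : j ≠ k) : π j ∘L π k = 0 := by
  have heig : ∀ i (w : V), A (π i w) = (lam i : ℂ) • (π i w) := by
    intro i w
    have := congrArg (fun T => T w) (hπeig i)
    simpa using this
  have horth : ∀ u w : V, ⟪π j u, π k w⟫ = 0 := fun u w =>
    aux_inner_eig_orth hAsa (fun h => hjk (hlam h)) (heig j u) (heig k w)
  ext w
  set x := π k w with hxdef
  have h2 : π j (π j x) = π j x := by
    have := congrArg (fun T => T x) (hπidem j)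
    simpa using this
  have hx : ⟪π j x, π j x⟫ = 0 := by
    have h1 : ⟪π j (π j x), x⟫ = ⟪π j x, π j x⟫ := aux_sym (hπsa j) (π j x) x
    rw [h2] at h1
    rw [← h1]
    exact horth x w
  simpa using inner_self_eq_zero.mp hx

lemma aux_p_pi
    (hπidem : ∀ j, π j ∘L π j = π j)
    (hπorth : ∀ {j k : Fin m}, j ≠ k → π j ∘L π k = 0)
    (hsum : p = ∑ j, π j) (j : Fin m) : p ∘L π j = π j ∧ π j ∘L p = π j := by
  constructor
  · rw [hsum]
    rw [show (∑ k, π k) ∘L π j = ∑ k, π k ∘L π j from by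
      ext v; simp [ContinuousLinearMap.sum_apply]]
    rw [Finset.sum_eq_single j (fun k _ hk => hπorth hk) (by simp)]
    exact hπidem j
  · rw [hsum]
    rw [show π j ∘L (∑ k, π k) = ∑ k, π j ∘L π k from by
      ext v; simp [ContinuousLinearMap.sum_apply]]
    rw [Finset.sum_eq_single j (fun k _ hk => hπorth (Ne.symm hk)) (by simp)]
    exact hπidem j

-- key summation bound: ∑ j ‖π j v‖ ≤ √m ‖v‖
lemma aux_sum_pi_le
    (hpsa : IsSelfAdjoint p) (hpidem : p ∘L p = p)
    (hπsa : ∀ j, IsSelfAdjoint (π j)) (hπidem : ∀ j, π j ∘L π j = π j)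
    (hsum : p = ∑ j, π j) (v : V) :
    ∑ j, ‖π j v‖ ≤ Real.sqrt m * ‖v‖ := by
  have hsq : (∑ j, ‖π j v‖) ^ 2 ≤ (m : ℝ) * ∑ j, ‖π j v‖ ^ 2 := by
    simpa using sq_sum_le_card_mul_sum_sq (s := Finset.univ)
      (f := fun j => ‖π j v‖)
  have hsumsq : ∑ j, ‖π j v‖ ^ 2 = ‖p v‖ ^ 2 := by
    have h1 : Complex.re ⟪v, p v⟫ = ∑ i, ‖π i v‖ ^ 2 := by
      rw [hsum]
      rw [show ((∑ i, π i) v) = ∑ i, π i v from by simp]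
      rw [inner_sum, Complex.re_sum]
      refine Finset.sum_congr rfl fun i _ => ?_
      rw [aux_inner_proj (π i) (hπsa i) (hπidem i) v]
      simp [pow_two]
    have h2 : Complex.re ⟪v, p v⟫ = ‖p v‖ ^ 2 := by
      rw [aux_inner_proj p hpsa hpidem v]; simp [pow_two]
    rw [← h1, h2]
  have hple : ‖p v‖ ≤ ‖v‖ := aux_proj_norm_apply_le p hpsa hpidem v
  have hsq2 : (∑ j, ‖π j v‖) ^ 2 ≤ (m : ℝ) * ‖v‖ ^ 2 := by
    rw [hsumsq] at hsq
    have : (m:ℝ) * ‖p v‖ ^2 ≤ (m:ℝ) * ‖v‖^2 := by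
      have := mul_le_mul_of_nonneg_left (pow_le_pow_left₀ (norm_nonneg _) hple 2)
        (by positivity : (0:ℝ) ≤ m)
      exact this
    linarith
  have hnonneg : 0 ≤ ∑ j, ‖π j v‖ := Finset.sum_nonneg fun j _ => norm_nonneg _
  calc ∑ j, ‖π j v‖ = Real.sqrt ((∑ j, ‖π j v‖) ^ 2) := (Real.sqrt_sq hnonneg).symm
    _ ≤ Real.sqrt ((m : ℝ) * ‖v‖ ^ 2) := Real.sqrt_le_sqrt hsq2
    _ = Real.sqrt m * ‖v‖ := by
        rw [Real.sqrt_mul (by positivity), Real.sqrt_sq (norm_nonneg _)]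

end aux3
section aux4
set_option linter.unusedSectionVars false
variable {V : Type*} [NormedAddCommGroup V] [InnerProductSpace ℂ V] [FiniteDimensional ℂ V]
local notation "⟪" x ", " y "⟫" => @inner ℂ _ _ x y

variable {m : ℕ} {A p : V →L[ℂ] V} {π : Fin m → V →L[ℂ] V} {lam : Fin m → ℝ}

-- ‖∑ T j ∘L π j‖ ≤ √m * c
lemma aux_right_sum_bound
    (hpsa : IsSelfAdjoint p) (hpidem : p ∘L p = p)
    (hπsa : ∀ j, IsSelfAdjoint (π j)) (hπidem : ∀ j, π j ∘L π j = π j)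
    (hsum : p = ∑ j, π j)
    (T : Fin m → V →L[ℂ] V) {c : ℝ} (hc : 0 ≤ c) (hT : ∀ j, ‖T j‖ ≤ c) :
    ‖∑ j, T j ∘L π j‖ ≤ Real.sqrt m * c := by
  refine ContinuousLinearMap.opNorm_le_bound _ (by positivity) (fun v => ?_)
  calc ‖(∑ j, T j ∘L π j) v‖ = ‖∑ j, T j (π j v)‖ := by simp
    _ ≤ ∑ j, ‖T j (π j v)‖ := norm_sum_le _ _
    _ ≤ ∑ j, c * ‖π j v‖ := by
        refine Finset.sum_le_sum fun j _ => ?_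
        calc ‖T j (π j v)‖ ≤ ‖T j‖ * ‖π j v‖ := ContinuousLinearMap.le_opNorm _ _
          _ ≤ c * ‖π j v‖ := by
              exact mul_le_mul_of_nonneg_right (hT j) (norm_nonneg _)
    _ = c * ∑ j, ‖π j v‖ := by rw [Finset.mul_sum]
    _ ≤ c * (Real.sqrt m * ‖v‖) := by
        exact mul_le_mul_of_nonneg_left (aux_sum_pi_le hpsa hpidem hπsa hπidem hsum v) hc
    _ = Real.sqrt m * c * ‖v‖ := by ring

-- ‖∑ π j ∘L S j‖ ≤ √m * c  (via adjoints)
lemma aux_left_sum_bound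
    (hpsa : IsSelfAdjoint p) (hpidem : p ∘L p = p)
    (hπsa : ∀ j, IsSelfAdjoint (π j)) (hπidem : ∀ j, π j ∘L π j = π j)
    (hsum : p = ∑ j, π j)
    (S : Fin m → V →L[ℂ] V) {c : ℝ} (hc : 0 ≤ c) (hS : ∀ j, ‖S j‖ ≤ c) :
    ‖∑ j, π j ∘L S j‖ ≤ Real.sqrt m * c := by
  have key : ‖∑ j, ContinuousLinearMap.adjoint (S j) ∘L π j‖ ≤ Real.sqrt m * c := by
    refine aux_right_sum_bound hpsa hpidem hπsa hπidem hsum _ hc (fun j => ?_)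
    rw [LinearIsometryEquiv.norm_map ContinuousLinearMap.adjoint]
    exact hS j
  have hadj : ContinuousLinearMap.adjoint (∑ j, π j ∘L S j)
      = ∑ j, ContinuousLinearMap.adjoint (S j) ∘L π j := by
    rw [map_sum]
    refine Finset.sum_congr rfl fun j _ => ?_
    rw [ContinuousLinearMap.adjoint_comp]
    congr 1
    exact (ContinuousLinearMap.star_eq_adjoint _).symm.trans (hπsa j)
  calc ‖∑ j, π j ∘L S j‖ = ‖ContinuousLinearMap.adjoint (∑ j, π j ∘L S j)‖ := by
        rw [LinearIsometryEquiv.norm_map ContinuousLinearMap.adjoint]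
    _ = ‖∑ j, ContinuousLinearMap.adjoint (S j) ∘L π j‖ := by rw [hadj]
    _ ≤ Real.sqrt m * c := key

-- double sum bound: ‖∑ j k, C j k ∘L π k ∘L M ∘L π j‖ ≤ m * c * ‖M‖
lemma aux_double_sum_bound
    (hpsa : IsSelfAdjoint p) (hpidem : p ∘L p = p)
    (hπsa : ∀ j, IsSelfAdjoint (π j)) (hπidem : ∀ j, π j ∘L π j = π j)
    (hsum : p = ∑ j, π j)
    (C : Fin m → Fin m → V →L[ℂ] V) (M : V →L[ℂ] V) {c : ℝ} (hc : 0 ≤ c)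
    (hC : ∀ j k, ‖C j k‖ ≤ c) :
    ‖∑ j, ∑ k, C j k ∘L π k ∘L M ∘L π j‖ ≤ (m : ℝ) * c * ‖M‖ := by
  refine ContinuousLinearMap.opNorm_le_bound _ (by positivity) (fun v => ?_)
  have hinner : ∀ j, ∑ k, ‖C j k (π k (M (π j v)))‖ ≤ c * (Real.sqrt m * (‖M‖ * ‖π j v‖)) := by
    intro j
    calc ∑ k, ‖C j k (π k (M (π j v)))‖ ≤ ∑ k, c * ‖π k (M (π j v))‖ := by
          refine Finset.sum_le_sum fun k _ => ?_
          calc ‖C j k (π k (M (π j v)))‖ ≤ ‖C j k‖ * ‖π k (M (π j v))‖ :=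
                ContinuousLinearMap.le_opNorm _ _
            _ ≤ c * ‖π k (M (π j v))‖ := mul_le_mul_of_nonneg_right (hC j k) (norm_nonneg _)
      _ = c * ∑ k, ‖π k (M (π j v))‖ := by rw [Finset.mul_sum]
      _ ≤ c * (Real.sqrt m * ‖M (π j v)‖) :=
          mul_le_mul_of_nonneg_left (aux_sum_pi_le hpsa hpidem hπsa hπidem hsum _) hc
      _ ≤ c * (Real.sqrt m * (‖M‖ * ‖π j v‖)) := by
          refine mul_le_mul_of_nonneg_left (mul_le_mul_of_nonneg_left ?_ (Real.sqrt_nonneg _)) hc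
          exact ContinuousLinearMap.le_opNorm _ _
  calc ‖(∑ j, ∑ k, C j k ∘L π k ∘L M ∘L π j) v‖
      = ‖∑ j, ∑ k, C j k (π k (M (π j v)))‖ := by simp
    _ ≤ ∑ j, ‖∑ k, C j k (π k (M (π j v)))‖ := norm_sum_le _ _
    _ ≤ ∑ j, ∑ k, ‖C j k (π k (M (π j v)))‖ :=
        Finset.sum_le_sum fun j _ => norm_sum_le _ _
    _ ≤ ∑ j, c * (Real.sqrt m * (‖M‖ * ‖π j v‖)) := Finset.sum_le_sum fun j _ => hinner j
    _ = c * Real.sqrt m * ‖M‖ * ∑ j, ‖π j v‖ := by rw [Finset.mul_sum]; ring_nf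
    _ ≤ c * Real.sqrt m * ‖M‖ * (Real.sqrt m * ‖v‖) := by
        refine mul_le_mul_of_nonneg_left (aux_sum_pi_le hpsa hpidem hπsa hπidem hsum v) ?_
        positivity
    _ = (Real.sqrt m * Real.sqrt m) * c * ‖M‖ * ‖v‖ := by ring
    _ = (m : ℝ) * c * ‖M‖ * ‖v‖ := by
        rw [Real.mul_self_sqrt (by positivity)]

end aux4
section aux5
set_option linter.unusedSectionVars false
set_option maxHeartbeats 800000
variable {V : Type*} [NormedAddCommGroup V] [InnerProductSpace ℂ V] [FiniteDimensional ℂ V]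
local notation "⟪" x ", " y "⟫" => @inner ℂ _ _ x y

variable {m : ℕ} {A p : V →L[ℂ] V} {π : Fin m → V →L[ℂ] V} {lam : Fin m → ℝ} {g : ℝ}

lemma aux_eig_ker
    (hπsa : ∀ j, IsSelfAdjoint (π j)) (hπidem : ∀ j, π j ∘L π j = π j)
    (hπfull : ∀ j, ∀ v : V, A v = (lam j : ℂ) • v → π j v = v)
    (hsum : p = ∑ j, π j)
    (hgap : ∀ (μ : ℝ) (v : V), v ≠ 0 → A v = (μ : ℂ) • v →
      (∀ j, μ ≠ lam j) → ∀ j, g ≤ |μ - lam j|)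
    {μ : ℝ} {v : V} (hv : v ≠ 0) (hAv : A v = (μ : ℂ) • v) (hker : p v = 0) :
    ∀ j, g ≤ |μ - lam j| := by
  refine hgap μ v hv hAv (fun j hμ => ?_)
  have hjv : π j v = v := hπfull j v (by rw [← hμ]; exact hAv)
  have h0 : Complex.re ⟪v, p v⟫ = ∑ i, ‖π i v‖ ^ 2 := by
    rw [hsum]
    rw [show ((∑ i, π i) v) = ∑ i, π i v from by simp]
    rw [inner_sum, Complex.re_sum]
    refine Finset.sum_congr rfl fun i _ => ?_
    rw [aux_inner_proj (π i) (hπsa i) (hπidem i) v]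
    simp [pow_two]
  rw [hker] at h0
  simp at h0
  have h1 : ‖π j v‖ ^ 2 ≤ ∑ i, ‖π i v‖ ^ 2 :=
    Finset.single_le_sum (f := fun i => ‖π i v‖ ^ 2) (fun i _ => by positivity)
      (Finset.mem_univ j)
  rw [hjv, ← h0] at h1
  have : 0 < ‖v‖ := norm_pos_iff.mpr hv
  nlinarith

lemma aux_lower_bound_ker
    (hAsa : IsSelfAdjoint A)
    (hpA : A ∘L p = p ∘L A)
    (hπsa : ∀ j, IsSelfAdjoint (π j)) (hπidem : ∀ j, π j ∘L π j = π j)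
    (hπfull : ∀ j, ∀ v : V, A v = (lam j : ℂ) • v → π j v = v)
    (hsum : p = ∑ j, π j)
    (hg : 0 < g)
    (hgap : ∀ (μ : ℝ) (v : V), v ≠ 0 → A v = (μ : ℂ) • v →
      (∀ j, μ ≠ lam j) → ∀ j, g ≤ |μ - lam j|)
    (j : Fin m) (u : V) (hu : p u = 0) :
    g * ‖u‖ ≤ ‖A u - (lam j : ℂ) • u‖ := by
  set S : Submodule ℂ V := LinearMap.ker (p : V →ₗ[ℂ] V) with hS
  have hinv : ∀ x ∈ S, A x ∈ S := by
    intro x hx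
    have hx' : p x = 0 := hx
    have h2 : p (A x) = A (p x) := by
      have := congrArg (fun T => T x) hpA
      simpa using this.symm
    have : p (A x) = 0 := by rw [h2, hx', map_zero]
    exact this
  set T : S →ₗ[ℂ] S := ((A : V →ₗ[ℂ] V)).restrict hinv with hT
  have hTsym : T.IsSymmetric := by
    intro x y
    have h1 : ((T x : S) : V) = A (x : V) := rfl
    have h2 : ((T y : S) : V) = A (y : V) := rfl
    simp only [Submodule.coe_inner, h1, h2]
    exact aux_sym hAsa (x : V) (y : V)
  set n := Module.finrank ℂ S with hn
  have hrank : Module.finrank ℂ S = n := rfl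
  set B := hTsym.eigenvectorBasis hrank with hB
  set μ : Fin n → ℝ := hTsym.eigenvalues hrank with hμ
  -- each eigenvalue is g-away from lam j
  have hgapμ : ∀ i, g ≤ |μ i - lam j| := by
    intro i
    have hvne : ((B i : S) : V) ≠ 0 := by
      have h0 : (B i : S) ≠ 0 := B.orthonormal.ne_zero i
      simpa [Submodule.coe_eq_zero] using h0
    have hAv : A ((B i : S) : V) = ((μ i : ℝ) : ℂ) • ((B i : S) : V) := by
      have h1 : T (B i) = ((μ i : ℝ) : ℂ) • (B i) := hTsym.apply_eigenvectorBasis hrank i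
      have := congrArg (fun x : S => (x : V)) h1
      have h2 : ((T (B i) : S) : V) = A ((B i : S) : V) := rfl
      simpa [h2] using this
    have hker : p ((B i : S) : V) = 0 := (B i : S).2
    exact aux_eig_ker hπsa hπidem hπfull hsum hgap hvne hAv hker j
  -- transfer u into S
  set uS : S := ⟨u, hu⟩ with huS
  have hgoal : g * ‖uS‖ ≤ ‖T uS - ((lam j : ℝ) : ℂ) • uS‖ := by
    set d := B.repr uS with hd
    have hrepr : ∀ i, B.repr (T uS - ((lam j : ℝ) : ℂ) • uS) i
        = (((μ i : ℝ) : ℂ) - ((lam j : ℝ) : ℂ)) * d i := by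
      intro i
      rw [map_sub, map_smul]
      have h1 : B.repr (T uS) i = μ i * d i :=
        hTsym.eigenvectorBasis_apply_self_apply hrank uS i
      simp only [PiLp.sub_apply, PiLp.smul_apply, h1, smul_eq_mul]
      push_cast
      ring
    have hnorm1 : ‖uS‖ = ‖d‖ := (B.repr.norm_map uS).symm
    have hnorm2 : ‖T uS - ((lam j : ℝ) : ℂ) • uS‖ = ‖B.repr (T uS - ((lam j : ℝ) : ℂ) • uS)‖ :=
      (B.repr.norm_map _).symm
    rw [hnorm1, hnorm2]
    have hsq : (g * ‖d‖) ^ 2 ≤ ‖B.repr (T uS - ((lam j : ℝ) : ℂ) • uS)‖ ^ 2 := by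
      rw [EuclideanSpace.norm_eq, EuclideanSpace.norm_eq]
      rw [Real.sq_sqrt (by positivity), mul_pow, Real.sq_sqrt (by positivity)]
      rw [Finset.mul_sum]
      refine Finset.sum_le_sum fun i _ => ?_
      rw [hrepr i]
      have h3 : ‖(((μ i : ℝ) : ℂ) - ((lam j : ℝ) : ℂ)) * d i‖ = |μ i - lam j| * ‖d i‖ := by
        rw [norm_mul]
        congr 1
        rw [← Complex.ofReal_sub, Complex.norm_real, Real.norm_eq_abs]
      rw [h3, mul_pow]
      have h4 : g ^ 2 ≤ |μ i - lam j| ^ 2 := by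
        have := hgapμ i
        nlinarith [abs_nonneg (μ i - lam j), hg.le]
      nlinarith [norm_nonneg (d i), sq_nonneg (‖d i‖)]
    have h5 : 0 ≤ g * ‖d‖ := by positivity
    nlinarith [norm_nonneg (B.repr (T uS - ((lam j : ℝ) : ℂ) • uS))]
  -- transfer back
  have hTu : ((T uS - ((lam j : ℝ) : ℂ) • uS : S) : V) = A u - (lam j : ℂ) • u := by
    simp only [Submodule.coe_sub, Submodule.coe_smul]
    rfl
  have h6 : ‖T uS - ((lam j : ℝ) : ℂ) • uS‖ = ‖A u - (lam j : ℂ) • u‖ := by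
    rw [← hTu]
    rfl
  have h7 : ‖uS‖ = ‖u‖ := rfl
  rw [← h6, ← h7]
  exact hgoal

lemma aux_r_norm
    (hAsa : IsSelfAdjoint A)
    (hpsa : IsSelfAdjoint p)
    (hpidem : p ∘L p = p)
    (hpA : A ∘L p = p ∘L A)
    (hπsa : ∀ j, IsSelfAdjoint (π j)) (hπidem : ∀ j, π j ∘L π j = π j)
    (hπfull : ∀ j, ∀ v : V, A v = (lam j : ℂ) • v → π j v = v)
    (hsum : p = ∑ j, π j)
    (hg : 0 < g)
    (hgap : ∀ (μ : ℝ) (v : V), v ≠ 0 → A v = (μ : ℂ) • v →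
      (∀ j, μ ≠ lam j) → ∀ j, g ≤ |μ - lam j|)
    (r : V →L[ℂ] V) (j : Fin m)
    (hrl : (A - (lam j : ℂ) • 1) ∘L r = 1 - p)
    (hrp : p ∘L r = 0) :
    ‖r‖ ≤ 1 / g := by
  refine ContinuousLinearMap.opNorm_le_bound _ (by positivity) (fun w => ?_)
  have h1 : p (r w) = 0 := by
    have := congrArg (fun T => T w) hrp
    simpa using this
  have h2 : A (r w) - (lam j : ℂ) • (r w) = w - p w := by
    have := congrArg (fun T => T w) hrl
    simpa [sub_smul, ContinuousLinearMap.sub_apply] using this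
  have h3 := aux_lower_bound_ker hAsa hpA hπsa hπidem hπfull hsum hg hgap j (r w) h1
  rw [h2] at h3
  have h4 : ‖w - p w‖ ≤ ‖w‖ := by
    have hqsa : IsSelfAdjoint ((1 : V →L[ℂ] V) - p) := by
      have : IsSelfAdjoint (1 : V →L[ℂ] V) := (IsSelfAdjoint.one (V →L[ℂ] V))
      exact this.sub hpsa
    have hqidem : ((1 : V →L[ℂ] V) - p) ∘L ((1 : V →L[ℂ] V) - p) = 1 - p := by
      ext v
      simp [ContinuousLinearMap.sub_apply, map_sub]
      have : p (p v) = p v := by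
        have := congrArg (fun T => T v) hpidem
        simpa using this
      rw [this]
      abel
    have := aux_proj_norm_apply_le _ hqsa hqidem w
    simpa using this
  calc ‖r w‖ = (1/g) * (g * ‖r w‖) := by field_simp
    _ ≤ (1/g) * ‖w‖ := by
        refine mul_le_mul_of_nonneg_left (le_trans h3 h4) (by positivity)
end aux5
section aux6
set_option linter.unusedSectionVars false

lemma aux_deriv_eq {E : Type*} [NormedAddCommGroup E] [NormedSpace ℝ E]
    {f h : ℝ → E} {f' h' : E} {s : ℝ} (hs : s ∈ Set.Icc (0:ℝ) 1)
    (hfh : ∀ t ∈ Set.Icc (0:ℝ) 1, f t = h t)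
    (hf : HasDerivWithinAt f f' (Set.Icc (0:ℝ) 1) s)
    (hh : HasDerivWithinAt h h' (Set.Icc (0:ℝ) 1) s) : f' = h' := by
  have hh2 : HasDerivWithinAt f h' (Set.Icc (0:ℝ) 1) s :=
    hh.congr (fun t ht => hfh t ht) (hfh s hs)
  exact UniqueDiffWithinAt.eq_deriv _ (uniqueDiffOn_Icc_zero_one s hs) hf hh2

-- solve:  Z = r * W  from  (A-λ)Z = W on range of q
lemma aux_solve {B : Type*} [Ring B] [Algebra ℂ B] {A q r Z W : B} {lam : ℂ}
    (hrr : r * (A - lam • 1) = q) (hqZ : q * Z = Z) (hW : A * Z - lam • Z = W) :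
    Z = r * W := by
  have h1 : r * (A * Z - lam • Z) = r * ((A - lam • 1) * Z) := by
    rw [sub_mul, smul_mul_assoc, one_mul]
  rw [← hW, h1, ← mul_assoc, hrr, hqZ]

lemma aux_solve' {B : Type*} [Ring B] [Algebra ℂ B] {A q r Z W : B} {lam : ℂ}
    (hrl : (A - lam • 1) * r = q) (hZq : Z * q = Z) (hW : Z * A - lam • Z = W) :
    Z = W * r := by
  have h1 : (Z * A - lam • Z) * r = Z * ((A - lam • 1) * r) := by
    rw [← mul_assoc, mul_sub, mul_smul_comm, mul_one, sub_mul]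
  rw [← hW, h1, hrl, hZq]

end aux6
section aux7
set_option linter.unusedSectionVars false
variable {V : Type*} [NormedAddCommGroup V] [InnerProductSpace ℂ V] [FiniteDimensional ℂ V]

lemma aux_comm_term {A p X π r : V →L[ℂ] V} {lam : ℝ}
    (hπeig : A * π = (lam : ℂ) • π)
    (hπA : π * A = (lam : ℂ) • π)
    (hrl : (A - (lam : ℂ) • 1) * r = 1 - p)
    (hrr : r * (A - (lam : ℂ) • 1) = 1 - p) :
    A * (π * X * r + r * X * π) - (π * X * r + r * X * π) * A
      = (1 - p) * X * π - π * X * (1 - p) := by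
  have hAr : A * r = (lam : ℂ) • r + (1 - p) := by
    have h := hrl
    rw [sub_mul, smul_mul_assoc, one_mul] at h
    linear_combination (norm := abel) h
  have hrA : r * A = (lam : ℂ) • r + (1 - p) := by
    have h := hrr
    rw [mul_sub, mul_smul_comm, mul_one] at h
    linear_combination (norm := abel) h
  have e1 : A * (π * X * r) = (lam : ℂ) • (π * X * r) := by
    rw [← mul_assoc, ← mul_assoc, hπeig, smul_mul_assoc, smul_mul_assoc]
  have e2 : (π * X * r) * A = (lam : ℂ) • (π * X * r) + π * X * (1 - p) := by
    rw [mul_assoc, hrA, mul_add, mul_smul_comm, mul_assoc]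
  have e3 : A * (r * X * π) = (lam : ℂ) • (r * X * π) + (1 - p) * X * π := by
    rw [← mul_assoc, ← mul_assoc, hAr]
    rw [add_mul, add_mul, smul_mul_assoc, smul_mul_assoc]
  have e4 : (r * X * π) * A = (lam : ℂ) • (r * X * π) := by
    rw [mul_assoc, hπA, mul_smul_comm, mul_assoc]
  rw [mul_add, add_mul, e1, e2, e3, e4]
  abel

lemma aux_comm_tw {m : ℕ} {A p X : V →L[ℂ] V} {π r : Fin m → V →L[ℂ] V} {lam : Fin m → ℝ}
    (hπeig : ∀ j, A * π j = (lam j : ℂ) • π j)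
    (hπA : ∀ j, π j * A = (lam j : ℂ) • π j)
    (hrl : ∀ j, (A - (lam j : ℂ) • 1) * r j = 1 - p)
    (hrr : ∀ j, r j * (A - (lam j : ℂ) • 1) = 1 - p)
    (hsum : p = ∑ j, π j) :
    A * (-(∑ j, (π j * X * r j + r j * X * π j)))
      - (-(∑ j, (π j * X * r j + r j * X * π j))) * A
      = p * X - X * p := by
  have key : A * (∑ j, (π j * X * r j + r j * X * π j))
      - (∑ j, (π j * X * r j + r j * X * π j)) * A
      = (1 - p) * X * p - p * X * (1 - p) := by
    rw [Finset.mul_sum, Finset.sum_mul, ← Finset.sum_sub_distrib]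
    have : ∀ j ∈ Finset.univ, A * (π j * X * r j + r j * X * π j)
        - (π j * X * r j + r j * X * π j) * A
        = (1 - p) * X * π j - π j * X * (1 - p) := fun j _ =>
      aux_comm_term (hπeig j) (hπA j) (hrl j) (hrr j)
    rw [Finset.sum_congr rfl this, Finset.sum_sub_distrib, ← Finset.mul_sum, ← Finset.sum_mul,
      ← Finset.sum_mul, ← hsum]
  rw [mul_neg, neg_mul, sub_neg_eq_add, ← sub_eq_neg_add, ← neg_sub, key]
  noncomm_ring


end aux7

set_option maxHeartbeats 1000000 in
/-- **Second-order gap bounds (Lemma 9, parts 3 and 4).**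

`H s` is a twice continuously differentiable family of self-adjoint operators
(derivatives `H'`, `H''`), `P s` a twice continuously differentiable family of
orthogonal projections (derivatives `P'`, `P''`) commuting with `H s`, equal to the sum
of the spectral projections `Pj s j` of `H s` onto the eigenvalues `lam s j`, with gap
`g s > 0` to the rest of the spectrum; `Q s := 1 − P s`.  `R s j` is the reduced
resolvent of `H s` at `lam s j` and `TW s X := −Σⱼ ( Pⱼ X R̂_{λⱼ} + R̂_{λⱼ} X Pⱼ )` the
twiddle.

Then `‖Q P̈ P‖ ≤ √m ‖Ḧ‖/g + 4m ‖Ḣ‖²/g²`, and for the derivative `D` of `s ↦ (Ṗ)~`: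
`‖Q D P‖ ≤ √m ‖Q P̈ P‖/g + 2m ‖Ḣ‖ ‖Ṗ‖/g² ≤ m ‖Ḧ‖/g² + 6 m^{3/2} ‖Ḣ‖²/g³`. -/
theorem second_order_gap_bounds
    {V : Type*} [NormedAddCommGroup V] [InnerProductSpace ℂ V] [FiniteDimensional ℂ V]
    (m : ℕ)
    (H H' H'' P P' P'' : ℝ → V →L[ℂ] V)
    (lam : ℝ → Fin m → ℝ) (g : ℝ → ℝ)
    (Pj R : ℝ → Fin m → V →L[ℂ] V)
    (hHsa : ∀ s ∈ Set.Icc (0:ℝ) 1, IsSelfAdjoint (H s))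
    (hH' : ∀ s ∈ Set.Icc (0:ℝ) 1, HasDerivAt H (H' s) s)
    (hH'' : ∀ s ∈ Set.Icc (0:ℝ) 1, HasDerivAt H' (H'' s) s)
    (hH''c : ContinuousOn H'' (Set.Icc (0:ℝ) 1))
    (hPsa : ∀ s ∈ Set.Icc (0:ℝ) 1, IsSelfAdjoint (P s))
    (hPidem : ∀ s ∈ Set.Icc (0:ℝ) 1, P s ∘L P s = P s)
    (hPH : ∀ s ∈ Set.Icc (0:ℝ) 1, H s ∘L P s = P s ∘L H s)
    (hP' : ∀ s ∈ Set.Icc (0:ℝ) 1, HasDerivAt P (P' s) s)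
    (hP'' : ∀ s ∈ Set.Icc (0:ℝ) 1, HasDerivAt P' (P'' s) s)
    (hP''c : ContinuousOn P'' (Set.Icc (0:ℝ) 1))
    (hPjsa : ∀ s ∈ Set.Icc (0:ℝ) 1, ∀ j, IsSelfAdjoint (Pj s j))
    (hPjidem : ∀ s ∈ Set.Icc (0:ℝ) 1, ∀ j, Pj s j ∘L Pj s j = Pj s j)
    (hPjne : ∀ s ∈ Set.Icc (0:ℝ) 1, ∀ j, Pj s j ≠ 0)
    (hPjeig : ∀ s ∈ Set.Icc (0:ℝ) 1, ∀ j, H s ∘L Pj s j = (lam s j : ℂ) • Pj s j)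
    (hPjfull : ∀ s ∈ Set.Icc (0:ℝ) 1, ∀ j, ∀ v : V,
      H s v = (lam s j : ℂ) • v → Pj s j v = v)
    (hPsum : ∀ s ∈ Set.Icc (0:ℝ) 1, P s = ∑ j, Pj s j)
    (hgpos : ∀ s ∈ Set.Icc (0:ℝ) 1, 0 < g s)
    (hgap : ∀ s ∈ Set.Icc (0:ℝ) 1, ∀ (μ : ℝ) (v : V), v ≠ 0 → H s v = (μ : ℂ) • v →
      (∀ j, μ ≠ lam s j) → ∀ j, g s ≤ |μ - lam s j|)
    (hRl : ∀ s ∈ Set.Icc (0:ℝ) 1, ∀ j,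
      (H s - (lam s j : ℂ) • 1) ∘L R s j = 1 - P s)
    (hRr : ∀ s ∈ Set.Icc (0:ℝ) 1, ∀ j,
      R s j ∘L (H s - (lam s j : ℂ) • 1) = 1 - P s)
    (hRP : ∀ s ∈ Set.Icc (0:ℝ) 1, ∀ j, P s ∘L R s j = 0 ∧ R s j ∘L P s = 0) :
    let TW : ℝ → (V →L[ℂ] V) → V →L[ℂ] V := fun s Z =>
      -(∑ j, (Pj s j ∘L Z ∘L R s j + R s j ∘L Z ∘L Pj s j))
    let Q : ℝ → V →L[ℂ] V := fun s => 1 - P s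
    ∀ s ∈ Set.Icc (0:ℝ) 1,
      ‖Q s ∘L P'' s ∘L P s‖
          ≤ Real.sqrt m * ‖H'' s‖ / g s + 4 * (m : ℝ) * ‖H' s‖ ^ 2 / (g s) ^ 2 ∧
      ∀ D : V →L[ℂ] V, HasDerivAt (fun t => TW t (P' t)) D s →
        ‖Q s ∘L D ∘L P s‖
            ≤ Real.sqrt m * ‖Q s ∘L P'' s ∘L P s‖ / g s
              + 2 * (m : ℝ) * ‖H' s‖ * ‖P' s‖ / (g s) ^ 2 ∧
        Real.sqrt m * ‖Q s ∘L P'' s ∘L P s‖ / g s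
            + 2 * (m : ℝ) * ‖H' s‖ * ‖P' s‖ / (g s) ^ 2
          ≤ (m : ℝ) * ‖H'' s‖ / (g s) ^ 2
            + 6 * (m : ℝ) * Real.sqrt m * ‖H' s‖ ^ 2 / (g s) ^ 3 := by
  intro TW Q s hs
  classical
  have hQs : Q s = 1 - P s := rfl
  set F : ℝ → V →L[ℂ] V := fun t => TW t (P' t) with hFdef
  have hFeq : ∀ t, F t = -(∑ j, (Pj t j * P' t * R t j + R t j * P' t * Pj t j)) :=
    fun t => rfl
  clear_value TW Q
  -- ∀-time facts in `*` form
  have hπeig : ∀ t ∈ Set.Icc (0:ℝ) 1, ∀ j, H t * Pj t j = (lam t j : ℂ) • Pj t j :=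
    fun t ht j => by rw [ContinuousLinearMap.mul_def]; exact hPjeig t ht j
  have hπH : ∀ t ∈ Set.Icc (0:ℝ) 1, ∀ j, Pj t j * H t = (lam t j : ℂ) • Pj t j := by
    intro t ht j
    have h := congrArg star (hπeig t ht j)
    rw [star_mul, star_smul, (hPjsa t ht j).star_eq, (hHsa t ht).star_eq] at h
    simpa [Complex.star_def, Complex.conj_ofReal] using h
  have hrl : ∀ t ∈ Set.Icc (0:ℝ) 1, ∀ j,
      (H t - (lam t j : ℂ) • 1) * R t j = 1 - P t :=
    fun t ht j => by rw [ContinuousLinearMap.mul_def]; exact hRl t ht j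
  have hrr : ∀ t ∈ Set.Icc (0:ℝ) 1, ∀ j,
      R t j * (H t - (lam t j : ℂ) • 1) = 1 - P t :=
    fun t ht j => by rw [ContinuousLinearMap.mul_def]; exact hRr t ht j
  -- the twiddle function and its commutator identity
  have hcomm : ∀ t ∈ Set.Icc (0:ℝ) 1,
      H t * F t - F t * H t = P t * P' t - P' t * P t := by
    intro t ht
    rw [hFeq t]
    exact aux_comm_tw (hπeig t ht) (hπH t ht) (hrl t ht) (hrr t ht) (hPsum t ht)
  -- first derivative identity, everywhere on Icc
  have id1 : ∀ t ∈ Set.Icc (0:ℝ) 1,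
      H' t * P t + H t * P' t = P' t * H t + P t * H' t := by
    intro t ht
    refine aux_deriv_eq ht (fun u hu => ?_)
      (((hH' t ht).hasDerivWithinAt).mul ((hP' t ht).hasDerivWithinAt))
      (((hP' t ht).hasDerivWithinAt).mul ((hH' t ht).hasDerivWithinAt))
    rw [Pi.mul_apply, Pi.mul_apply]
    rw [ContinuousLinearMap.mul_def, ContinuousLinearMap.mul_def]
    exact hPH u hu
  -- second derivative identity at s
  have id2 : (H'' s * P s + H' s * P' s) + (H' s * P' s + H s * P'' s)
      = (P'' s * H s + P' s * H' s) + (P' s * H' s + P s * H'' s) := by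
    refine aux_deriv_eq hs (fun u hu => id1 u hu)
      ((((hH'' s hs).hasDerivWithinAt).mul ((hP' s hs).hasDerivWithinAt)).add
        (((hH' s hs).hasDerivWithinAt).mul ((hP'' s hs).hasDerivWithinAt)))
      ((((hP'' s hs).hasDerivWithinAt).mul ((hH' s hs).hasDerivWithinAt)).add
        (((hP' s hs).hasDerivWithinAt).mul ((hH'' s hs).hasDerivWithinAt)))
  -- idempotence derivative at s
  have id3 : P' s * P s + P s * P' s = P' s := by
    refine aux_deriv_eq hs (fun u hu => ?_)
      (((hP' s hs).hasDerivWithinAt).mul ((hP' s hs).hasDerivWithinAt))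
      ((hP' s hs).hasDerivWithinAt)
    rw [Pi.mul_apply]
    rw [ContinuousLinearMap.mul_def]
    exact hPidem u hu
  -- fixed-time facts at s
  have hG : 0 < g s := hgpos s hs
  have hAsa := hHsa s hs
  have hpsa := hPsa s hs
  have hπsa := hPjsa s hs
  have hpidem : P s * P s = P s := by
    rw [ContinuousLinearMap.mul_def]; exact hPidem s hs
  have hπidem : ∀ j, Pj s j * Pj s j = Pj s j := fun j => by
    rw [ContinuousLinearMap.mul_def]; exact hPjidem s hs j
  have hAp : H s * P s = P s * H s := by
    rw [ContinuousLinearMap.mul_def, ContinuousLinearMap.mul_def]; exact hPH s hs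
  have hsum : P s = ∑ j, Pj s j := hPsum s hs
  have hlaminj : Function.Injective (lam s) :=
    aux_lam_inj hpsa (hPidem s hs) hπsa (hPjidem s hs) (hPjne s hs)
      (hPjeig s hs) (hPjfull s hs) hsum
  have hπorth : ∀ {j k : Fin m}, j ≠ k → Pj s j * Pj s k = 0 := by
    intro j k hjk
    rw [ContinuousLinearMap.mul_def]
    exact aux_pi_orth hAsa hπsa (hPjidem s hs) (hPjeig s hs) hlaminj hjk
  have hpπ : ∀ j, P s * Pj s j = Pj s j := fun j => by
    rw [ContinuousLinearMap.mul_def]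
    exact (aux_p_pi (hPjidem s hs) (fun hjk =>
      by rw [← ContinuousLinearMap.mul_def]; exact hπorth hjk) hsum j).1
  have hπp : ∀ j, Pj s j * P s = Pj s j := fun j => by
    rw [ContinuousLinearMap.mul_def]
    exact (aux_p_pi (hPjidem s hs) (fun hjk =>
      by rw [← ContinuousLinearMap.mul_def]; exact hπorth hjk) hsum j).2
  have hpr : ∀ j, P s * R s j = 0 := fun j => by
    rw [ContinuousLinearMap.mul_def]; exact (hRP s hs j).1
  have hrp : ∀ j, R s j * P s = 0 := fun j => by
    rw [ContinuousLinearMap.mul_def]; exact (hRP s hs j).2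
  have hrnorm : ∀ j, ‖R s j‖ ≤ 1 / g s := fun j =>
    aux_r_norm hAsa hpsa (hPidem s hs) (hPH s hs) hπsa (hPjidem s hs)
      (hPjfull s hs) hsum hG (hgap s hs) (R s j) j (hRl s hs j) (hRP s hs j).1
  -- q facts
  have hqp : Q s * P s = 0 := by
    rw [hQs, sub_mul, one_mul, hpidem, sub_self]
  have hpq : P s * Q s = 0 := by
    rw [hQs, mul_sub, mul_one, hpidem, sub_self]
  have hqq : Q s * Q s = Q s := by
    rw [hQs, mul_sub, mul_one, sub_mul, one_mul, hpidem]
    abel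
  have hqsa : IsSelfAdjoint (Q s) := by
    rw [hQs]; exact (IsSelfAdjoint.one (V →L[ℂ] V)).sub hpsa
  have hqπ : ∀ j, Q s * Pj s j = 0 := fun j => by
    rw [hQs, sub_mul, one_mul, hpπ, sub_self]
  have hπq : ∀ j, Pj s j * Q s = 0 := fun j => by
    rw [hQs, mul_sub, mul_one, hπp, sub_self]
  have hqA : Q s * H s = H s * Q s := by
    rw [hQs, sub_mul, mul_sub, one_mul, mul_one, hAp]
  have hrq : ∀ j, R s j * Q s = R s j := fun j => by
    rw [hQs, mul_sub, mul_one, hrp, sub_zero]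
  have hqr : ∀ j, Q s * R s j = R s j := fun j => by
    rw [hQs, sub_mul, one_mul, hpr, sub_zero]
  -- lifted rewriting helpers
  have Lqp : ∀ X : V →L[ℂ] V, Q s * (P s * X) = 0 := fun X => by
    rw [← mul_assoc, hqp, zero_mul]
  have LqA : ∀ X : V →L[ℂ] V, Q s * (H s * X) = H s * (Q s * X) := fun X => by
    rw [← mul_assoc, hqA, mul_assoc]
  have Lqq : ∀ X : V →L[ℂ] V, Q s * (Q s * X) = Q s * X := fun X => by
    rw [← mul_assoc, hqq]
  have Lrq : ∀ j, ∀ X : V →L[ℂ] V, R s j * (Q s * X) = R s j * X := fun j X => by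
    rw [← mul_assoc, hrq]
  -- ============ sandwich I : Q P' πⱼ = -(R_j H') πⱼ ============
  have sandI : ∀ j, Q s * (P' s * Pj s j) = (-(R s j * H' s)) * Pj s j := by
    intro j
    have h0 : Q s * ((H' s * P s + H s * P' s) * Pj s j)
        = Q s * ((P' s * H s + P s * H' s) * Pj s j) := by rw [id1 s hs]
    simp only [add_mul, mul_add, mul_assoc] at h0
    rw [hpπ j, hπeig s hs j] at h0
    simp only [mul_smul_comm, Lqp, LqA] at h0
    rw [add_zero] at h0
    have hW : H s * (Q s * (P' s * Pj s j)) - ((lam s j : ℂ)) • (Q s * (P' s * Pj s j))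
        = -(Q s * (H' s * Pj s j)) := by
      linear_combination (norm := abel) h0
    have hZ := aux_solve (A := H s) (q := Q s) (r := R s j) (lam := ((lam s j : ℂ)))
      (by rw [hQs]; exact hrr s hs j) (Lqq _) hW
    rw [hZ, mul_neg, Lrq j, neg_mul, mul_assoc]
  -- ============ sandwich III : πⱼ P' Q = πⱼ (-(H' Rⱼ)) ============
  have Lπa : ∀ j, ∀ X : V →L[ℂ] V,
      Pj s j * (H s * X) = ((lam s j : ℂ)) • (Pj s j * X) := fun j X => by
    rw [← mul_assoc, hπH s hs j, smul_mul_assoc]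
  have Lπp : ∀ j, ∀ X : V →L[ℂ] V, Pj s j * (P s * X) = Pj s j * X := fun j X => by
    rw [← mul_assoc, hπp j]
  have sandIII : ∀ j, Pj s j * (P' s * Q s) = Pj s j * (-(H' s * R s j)) := by
    intro j
    have h0 : Pj s j * ((H' s * P s + H s * P' s) * Q s)
        = Pj s j * ((P' s * H s + P s * H' s) * Q s) := by rw [id1 s hs]
    simp only [add_mul, mul_add, mul_assoc] at h0
    rw [hpq] at h0
    simp only [mul_zero, Lπa, Lπp] at h0
    rw [← hqA] at h0
    have hW : (Pj s j * (P' s * Q s)) * H s - ((lam s j : ℂ)) • (Pj s j * (P' s * Q s))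
        = -(Pj s j * (H' s * Q s)) := by
      have hZa : (Pj s j * (P' s * Q s)) * H s = Pj s j * (P' s * (Q s * H s)) := by
        rw [mul_assoc, mul_assoc]
      rw [hZa]
      linear_combination (norm := abel) -h0
    have hZ := aux_solve' (A := H s) (q := Q s) (r := R s j) (lam := ((lam s j : ℂ)))
      (by rw [hQs]; exact hrl s hs j)
      (by rw [mul_assoc, mul_assoc, hqq] :
        (Pj s j * (P' s * Q s)) * Q s = Pj s j * (P' s * Q s)) hW
    rw [hZ, neg_mul, mul_assoc, mul_assoc, hqr j, ← mul_neg]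
  -- ============ sandwich II : Q P'' πⱼ = T2 j πⱼ ============
  have sandII : ∀ j, Q s * (P'' s * Pj s j)
      = (-(R s j * H'' s) + -(R s j * (H' s * P' s)) + -(R s j * (H' s * P' s))
          + R s j * (P' s * H' s) + R s j * (P' s * H' s)) * Pj s j := by
    intro j
    have h0 : Q s * (((H'' s * P s + H' s * P' s) + (H' s * P' s + H s * P'' s)) * Pj s j)
        = Q s * (((P'' s * H s + P' s * H' s) + (P' s * H' s + P s * H'' s)) * Pj s j) := by
      rw [id2]
    simp only [add_mul, mul_add, mul_assoc] at h0
    rw [hpπ j, hπeig s hs j] at h0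
    simp only [mul_smul_comm, Lqp, LqA] at h0
    have hW : H s * (Q s * (P'' s * Pj s j)) - ((lam s j : ℂ)) • (Q s * (P'' s * Pj s j))
        = -(Q s * (H'' s * Pj s j)) + -(Q s * (H' s * (P' s * Pj s j)))
          + -(Q s * (H' s * (P' s * Pj s j)))
          + Q s * (P' s * (H' s * Pj s j)) + Q s * (P' s * (H' s * Pj s j)) := by
      linear_combination (norm := abel) h0
    have hZ := aux_solve (A := H s) (q := Q s) (r := R s j) (lam := ((lam s j : ℂ)))
      (by rw [hQs]; exact hrr s hs j) (Lqq _) hW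
    rw [hZ]
    simp only [mul_add, mul_neg, add_mul, neg_mul, mul_assoc, Lrq]
  -- operator form of Q P'' P as a sum
  have hQPP : Q s * (P'' s * P s)
      = ∑ j, (-(R s j * H'' s) + -(R s j * (H' s * P' s)) + -(R s j * (H' s * P' s))
          + R s j * (P' s * H' s) + R s j * (P' s * H' s)) * Pj s j := by
    calc Q s * (P'' s * P s) = Q s * (P'' s * ∑ j, Pj s j) := by rw [← hsum]
      _ = ∑ j, Q s * (P'' s * Pj s j) := by
          rw [Finset.mul_sum, Finset.mul_sum]
      _ = _ := Finset.sum_congr rfl fun j _ => sandII j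
  -- operator form of Q P' P and P P' Q
  have hQP'P : Q s * (P' s * P s) = ∑ j, (-(R s j * H' s)) * Pj s j := by
    calc Q s * (P' s * P s) = Q s * (P' s * ∑ j, Pj s j) := by rw [← hsum]
      _ = ∑ j, Q s * (P' s * Pj s j) := by rw [Finset.mul_sum, Finset.mul_sum]
      _ = _ := Finset.sum_congr rfl fun j _ => sandI j
  have hPP'Q : P s * (P' s * Q s) = ∑ j, Pj s j * (-(H' s * R s j)) := by
    calc P s * (P' s * Q s) = (∑ j, Pj s j) * (P' s * Q s) := by rw [← hsum]
      _ = ∑ j, Pj s j * (P' s * Q s) := by rw [Finset.sum_mul]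
      _ = _ := Finset.sum_congr rfl fun j _ => sandIII j
  -- norm bounds
  set iG : ℝ := (g s)⁻¹ with hiGdef
  have hiG : 0 < iG := by positivity
  have hrnorm' : ∀ j, ‖R s j‖ ≤ iG := fun j => by
    have := hrnorm j
    rwa [one_div] at this
  have hb1 : ‖Q s * (P' s * P s)‖ ≤ Real.sqrt m * (‖H' s‖ * iG) := by
    rw [hQP'P]
    refine aux_right_sum_bound hpsa (hPidem s hs) hπsa (hPjidem s hs) hsum _
      (by positivity) (fun j => ?_)
    rw [norm_neg]
    calc ‖R s j * H' s‖ ≤ ‖R s j‖ * ‖H' s‖ := norm_mul_le _ _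
      _ ≤ iG * ‖H' s‖ := mul_le_mul_of_nonneg_right (hrnorm' j) (norm_nonneg _)
      _ = ‖H' s‖ * iG := by ring
  have hb2 : ‖P s * (P' s * Q s)‖ ≤ Real.sqrt m * (‖H' s‖ * iG) := by
    rw [hPP'Q]
    refine aux_left_sum_bound hpsa (hPidem s hs) hπsa (hPjidem s hs) hsum _
      (by positivity) (fun j => ?_)
    rw [norm_neg]
    calc ‖H' s * R s j‖ ≤ ‖H' s‖ * ‖R s j‖ := norm_mul_le _ _
      _ ≤ ‖H' s‖ * iG := mul_le_mul_of_nonneg_left (hrnorm' j) (norm_nonneg _)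
  -- ‖P'‖ ≤ √m ‖H'‖ / g  (Pythagoras)
  have hpp'p : P s * (P' s * P s) = 0 := by
    have h0 : P s * ((P' s * P s + P s * P' s)) = P s * P' s := by rw [id3]
    rw [mul_add, ← mul_assoc (P s) (P s) (P' s), hpidem] at h0
    linear_combination (norm := abel) h0
  have hsplit : Q s * (P' s * P s) + P s * (P' s * Q s) = P' s := by
    rw [hQs, sub_mul, one_mul]
    have e2 : P' s * (1 - P s) = P' s - P' s * P s := by rw [mul_sub, mul_one]
    rw [e2, mul_sub, hpp'p]
    linear_combination (norm := abel) id3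
  set M : ℝ := Real.sqrt m * (‖H' s‖ * iG) with hMdef
  have hM0 : 0 ≤ M := by positivity
  have hP'norm : ‖P' s‖ ≤ M := by
    refine ContinuousLinearMap.opNorm_le_bound _ hM0 (fun v => ?_)
    set x := (Q s * (P' s * P s)) v with hxdef
    set y := (P s * (P' s * Q s)) v with hydef
    have hxy : P' s v = x + y := by
      have := congrArg (fun T : V →L[ℂ] V => T v) hsplit
      rw [hxdef, hydef]
      simpa using this.symm
    have hxP : x = (Q s * (P' s * P s)) (P s v) := by
      have hop : (Q s * (P' s * P s)) * P s = Q s * (P' s * P s) := by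
        rw [mul_assoc, mul_assoc, hpidem]
      have := congrArg (fun T : V →L[ℂ] V => T v) hop
      rw [hxdef]
      simpa [ContinuousLinearMap.mul_apply] using this.symm
    have hyQ : y = (P s * (P' s * Q s)) (Q s v) := by
      have hop : (P s * (P' s * Q s)) * Q s = P s * (P' s * Q s) := by
        rw [mul_assoc, mul_assoc, hqq]
      have := congrArg (fun T : V →L[ℂ] V => T v) hop
      rw [hydef]
      simpa [ContinuousLinearMap.mul_apply] using this.symm
    have hx : ‖x‖ ≤ M * ‖P s v‖ := by
      rw [hxP]
      calc ‖(Q s * (P' s * P s)) (P s v)‖ ≤ ‖Q s * (P' s * P s)‖ * ‖P s v‖ :=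
            ContinuousLinearMap.le_opNorm _ _
        _ ≤ M * ‖P s v‖ := mul_le_mul_of_nonneg_right hb1 (norm_nonneg _)
    have hy : ‖y‖ ≤ M * ‖Q s v‖ := by
      rw [hyQ]
      calc ‖(P s * (P' s * Q s)) (Q s v)‖ ≤ ‖P s * (P' s * Q s)‖ * ‖Q s v‖ :=
            ContinuousLinearMap.le_opNorm _ _
        _ ≤ M * ‖Q s v‖ := mul_le_mul_of_nonneg_right hb2 (norm_nonneg _)
    have hxyo : (inner ℂ x y : ℂ) = 0 := by
      have hx2 : x = Q s ((P' s * P s) v) := by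
        rw [hxdef, ContinuousLinearMap.mul_apply]
      have hy2 : y = P s ((P' s * Q s) v) := by
        rw [hydef, ContinuousLinearMap.mul_apply]
      rw [hx2, hy2, aux_sym hqsa]
      have : Q s (P s ((P' s * Q s) v)) = (Q s * P s) ((P' s * Q s) v) := rfl
      rw [this, hqp]
      simp
    have hpqo : (inner ℂ (P s v) (Q s v) : ℂ) = 0 := by
      rw [aux_sym hpsa]
      have : P s (Q s v) = (P s * Q s) v := rfl
      rw [this, hpq]
      simp
    have hvsum : P s v + Q s v = v := by
      rw [hQs]
      simp
    have hnorm1 : ‖P' s v‖ ^ 2 = ‖x‖ ^ 2 + ‖y‖ ^ 2 := by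
      rw [hxy, @norm_add_sq ℂ _ _ _ _ x y, hxyo]
      simp
    have hnorm2 : ‖P s v‖ ^ 2 + ‖Q s v‖ ^ 2 = ‖v‖ ^ 2 := by
      have := @norm_add_sq ℂ _ _ _ _ (P s v) (Q s v)
      rw [hpqo, hvsum] at this
      simp at this
      linarith
    have hsq : ‖P' s v‖ ^ 2 ≤ (M * ‖v‖) ^ 2 := by
      have h1 : ‖x‖ ^ 2 ≤ (M * ‖P s v‖) ^ 2 := by
        have := norm_nonneg x; nlinarith
      have h2 : ‖y‖ ^ 2 ≤ (M * ‖Q s v‖) ^ 2 := by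
        have := norm_nonneg y; nlinarith
      calc ‖P' s v‖ ^ 2 = ‖x‖ ^ 2 + ‖y‖ ^ 2 := hnorm1
        _ ≤ (M * ‖P s v‖) ^ 2 + (M * ‖Q s v‖) ^ 2 := by linarith
        _ = M ^ 2 * (‖P s v‖ ^ 2 + ‖Q s v‖ ^ 2) := by ring
        _ = M ^ 2 * ‖v‖ ^ 2 := by rw [hnorm2]
        _ = (M * ‖v‖) ^ 2 := by ring
    nlinarith [norm_nonneg (P' s v), norm_nonneg v, mul_nonneg hM0 (norm_nonneg v)]
  have hsm : Real.sqrt m * Real.sqrt m = (m : ℝ) := Real.mul_self_sqrt (Nat.cast_nonneg m)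
  have hmle : Real.sqrt m ≤ (m : ℝ) := by
    rcases Nat.eq_zero_or_pos m with h | h
    · simp [h]
    · have h1 : (1:ℝ) ≤ (m:ℝ) := by exact_mod_cast h
      nlinarith [hsm, Real.sqrt_nonneg (m:ℝ), sq_nonneg (Real.sqrt m - 1)]
  have hdiv1 : ∀ x : ℝ, x / g s = x * iG := fun x => by rw [div_eq_mul_inv]
  have hdiv2 : ∀ x : ℝ, x / (g s) ^ 2 = x * iG ^ 2 := fun x => by
    rw [div_eq_mul_inv, ← inv_pow]
  have hdiv3 : ∀ x : ℝ, x / (g s) ^ 3 = x * iG ^ 3 := fun x => by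
    rw [div_eq_mul_inv, ← inv_pow]
  -- part 3 assembly
  have hQPPnorm : ‖Q s * (P'' s * P s)‖
      ≤ Real.sqrt m * (‖H'' s‖ * iG + 4 * (‖H' s‖ * (‖P' s‖ * iG))) := by
    rw [hQPP]
    refine aux_right_sum_bound hpsa (hPidem s hs) hπsa (hPjidem s hs) hsum _
      (by positivity) (fun j => ?_)
    have h1 : ‖R s j * H'' s‖ ≤ iG * ‖H'' s‖ := by
      calc ‖R s j * H'' s‖ ≤ ‖R s j‖ * ‖H'' s‖ := norm_mul_le _ _
        _ ≤ iG * ‖H'' s‖ := mul_le_mul_of_nonneg_right (hrnorm' j) (norm_nonneg _)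
    have h2 : ‖R s j * (H' s * P' s)‖ ≤ iG * (‖H' s‖ * ‖P' s‖) := by
      calc ‖R s j * (H' s * P' s)‖ ≤ ‖R s j‖ * ‖H' s * P' s‖ := norm_mul_le _ _
        _ ≤ iG * (‖H' s‖ * ‖P' s‖) :=
            mul_le_mul (hrnorm' j) (norm_mul_le _ _) (norm_nonneg _) hiG.le
    have h3 : ‖R s j * (P' s * H' s)‖ ≤ iG * (‖P' s‖ * ‖H' s‖) := by
      calc ‖R s j * (P' s * H' s)‖ ≤ ‖R s j‖ * ‖P' s * H' s‖ := norm_mul_le _ _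
        _ ≤ iG * (‖P' s‖ * ‖H' s‖) :=
            mul_le_mul (hrnorm' j) (norm_mul_le _ _) (norm_nonneg _) hiG.le
    calc ‖-(R s j * H'' s) + -(R s j * (H' s * P' s)) + -(R s j * (H' s * P' s))
          + R s j * (P' s * H' s) + R s j * (P' s * H' s)‖
        ≤ ‖-(R s j * H'' s) + -(R s j * (H' s * P' s)) + -(R s j * (H' s * P' s))
          + R s j * (P' s * H' s)‖ + ‖R s j * (P' s * H' s)‖ := norm_add_le _ _
      _ ≤ (‖-(R s j * H'' s) + -(R s j * (H' s * P' s)) + -(R s j * (H' s * P' s))‖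
          + ‖R s j * (P' s * H' s)‖) + ‖R s j * (P' s * H' s)‖ := by
            have := norm_add_le (-(R s j * H'' s) + -(R s j * (H' s * P' s))
              + -(R s j * (H' s * P' s))) (R s j * (P' s * H' s))
            linarith
      _ ≤ ((‖-(R s j * H'' s) + -(R s j * (H' s * P' s))‖ + ‖-(R s j * (H' s * P' s))‖)
          + ‖R s j * (P' s * H' s)‖) + ‖R s j * (P' s * H' s)‖ := by
            have := norm_add_le (-(R s j * H'' s) + -(R s j * (H' s * P' s)))
              (-(R s j * (H' s * P' s)))
            linarith
      _ ≤ (((‖R s j * H'' s‖ + ‖R s j * (H' s * P' s)‖) + ‖R s j * (H' s * P' s)‖)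
          + ‖R s j * (P' s * H' s)‖) + ‖R s j * (P' s * H' s)‖ := by
            have := norm_add_le (-(R s j * H'' s)) (-(R s j * (H' s * P' s)))
            rw [norm_neg, norm_neg] at this
            rw [norm_neg]
            linarith
      _ ≤ ‖H'' s‖ * iG + 4 * (‖H' s‖ * (‖P' s‖ * iG)) := by nlinarith [h1, h2, h3]
  have part3 : ‖Q s * (P'' s * P s)‖
      ≤ Real.sqrt m * ‖H'' s‖ / g s + 4 * (m : ℝ) * ‖H' s‖ ^ 2 / (g s) ^ 2 := by
    rw [hdiv1, hdiv2]
    have e : (4 * (Real.sqrt m * ‖H' s‖) * iG) * ‖P' s‖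
        ≤ (4 * (Real.sqrt m * ‖H' s‖) * iG) * (Real.sqrt m * (‖H' s‖ * iG)) :=
      mul_le_mul_of_nonneg_left hP'norm (by positivity)
    have hsm2 : Real.sqrt m * Real.sqrt m * (‖H' s‖ ^ 2 * iG ^ 2)
        = (m:ℝ) * (‖H' s‖ ^ 2 * iG ^ 2) := by rw [hsm]
    nlinarith [hQPPnorm, e, hsm2, Real.sqrt_nonneg (m:ℝ), norm_nonneg (H' s), hiG.le,
      norm_nonneg (P' s)]
  refine ⟨part3, ?_⟩
  -- ============ Part 4 ============
  intro D hD'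
  have hD : HasDerivAt F D s := hD'
  have hφ : HasDerivWithinAt (fun t => H t * F t - F t * H t)
      (H' s * F s + H s * D - (D * H s + F s * H' s)) (Set.Icc (0:ℝ) 1) s :=
    (((hH' s hs).hasDerivWithinAt.mul hD.hasDerivWithinAt).sub
      (hD.hasDerivWithinAt.mul (hH' s hs).hasDerivWithinAt))
  have hψ : HasDerivWithinAt (fun t => P t * P' t - P' t * P t)
      ((P' s * P' s + P s * P'' s) - (P'' s * P s + P' s * P' s)) (Set.Icc (0:ℝ) 1) s :=
    (((hP' s hs).hasDerivWithinAt.mul (hP'' s hs).hasDerivWithinAt).sub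
      (((hP'' s hs).hasDerivWithinAt).mul ((hP' s hs).hasDerivWithinAt)))
  have id4 := aux_deriv_eq hs hcomm hφ hψ
  -- F-facts
  have hrπ : ∀ k j, R s k * Pj s j = 0 := fun k j => by
    rw [← hpπ j, ← mul_assoc, hrp k, zero_mul]
  have hFπ : ∀ j, F s * Pj s j = -(R s j * (P' s * Pj s j)) := by
    intro j
    rw [hFeq s, neg_mul]
    congr 1
    rw [Finset.sum_mul]
    rw [Finset.sum_eq_single j (fun k _ hk => ?_) (fun h => absurd (Finset.mem_univ j) h)]
    · rw [add_mul, mul_assoc, mul_assoc, hrπ j j, mul_zero, mul_zero, zero_add,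
        mul_assoc, mul_assoc, hπidem j]
    · rw [add_mul, mul_assoc, mul_assoc, hrπ k j, mul_zero, mul_zero, zero_add,
        mul_assoc, mul_assoc, hπorth hk, mul_zero, mul_zero]
  have hqF : Q s * F s = -(∑ k, R s k * (P' s * Pj s k)) := by
    rw [hFeq s, mul_neg]
    congr 1
    rw [Finset.mul_sum]
    refine Finset.sum_congr rfl fun k _ => ?_
    rw [mul_add]
    have L1 : Q s * (Pj s k * P' s * R s k) = 0 := by
      rw [← mul_assoc, ← mul_assoc, hqπ k, zero_mul, zero_mul]
    have L2 : Q s * (R s k * P' s * Pj s k) = R s k * (P' s * Pj s k) := by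
      rw [← mul_assoc, ← mul_assoc, hqr k, mul_assoc]
    rw [L1, L2, zero_add]
  have LqF : ∀ X : V →L[ℂ] V, Q s * (F s * X) = -(∑ k, R s k * (P' s * Pj s k)) * X :=
    fun X => by rw [← mul_assoc, hqF]
  have sandIV : ∀ j, Q s * (D * Pj s j)
      = (-(R s j * (Q s * (P'' s * P s))) + R s j * (H' s * (R s j * P' s))) * Pj s j
        + ∑ k, (-(R s j * (R s k * P' s))) * (Pj s k * (H' s * Pj s j)) := by
    intro j
    have h0 : Q s * ((H' s * F s + H s * D - (D * H s + F s * H' s)) * Pj s j)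
        = Q s * (((P' s * P' s + P s * P'' s) - (P'' s * P s + P' s * P' s)) * Pj s j) := by
      rw [id4]
    simp only [add_mul, sub_mul, mul_add, mul_sub, mul_assoc] at h0
    rw [hπeig s hs j, hpπ j, hFπ j] at h0
    simp only [mul_smul_comm, mul_neg, neg_mul, Lqp, LqA, LqF] at h0
    simp only [Finset.sum_mul, mul_assoc] at h0
    have hW : H s * (Q s * (D * Pj s j)) - ((lam s j : ℂ)) • (Q s * (D * Pj s j))
        = -(Q s * (P'' s * Pj s j)) + Q s * (H' s * (R s j * (P' s * Pj s j)))
          - ∑ x, R s x * (P' s * (Pj s x * (H' s * Pj s j))) := by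
      linear_combination (norm := abel) h0
    have hZ := aux_solve (A := H s) (q := Q s) (r := R s j) (lam := ((lam s j : ℂ)))
      (by rw [hQs]; exact hrr s hs j) (Lqq _) hW
    rw [hZ]
    simp only [mul_add, mul_sub, mul_neg, Finset.mul_sum, add_mul, neg_mul, mul_assoc,
      Lrq, hpπ, Finset.sum_neg_distrib]
    abel
  -- assemble Q D P
  have hQDP : Q s * (D * P s)
      = (∑ j, (-(R s j * (Q s * (P'' s * P s))) + R s j * (H' s * (R s j * P' s))) * Pj s j)
        + ∑ j, ∑ k, (-(R s j * (R s k * P' s))) * (Pj s k * (H' s * Pj s j)) := by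
    calc Q s * (D * P s) = Q s * (D * ∑ j, Pj s j) := by rw [← hsum]
      _ = ∑ j, Q s * (D * Pj s j) := by rw [Finset.mul_sum, Finset.mul_sum]
      _ = _ := by
          rw [Finset.sum_congr rfl (fun j _ => sandIV j), Finset.sum_add_distrib]
  -- norms
  set E : V →L[ℂ] V := Q s * (P'' s * P s) with hEdef
  have hb4 : ‖∑ j, (-(R s j * E) + R s j * (H' s * (R s j * P' s))) * Pj s j‖
      ≤ Real.sqrt m * (iG * ‖E‖ + iG * (‖H' s‖ * (iG * ‖P' s‖))) := by
    refine aux_right_sum_bound hpsa (hPidem s hs) hπsa (hPjidem s hs) hsum _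
      (by positivity) (fun j => ?_)
    have h1 : ‖R s j * E‖ ≤ iG * ‖E‖ := by
      calc ‖R s j * E‖ ≤ ‖R s j‖ * ‖E‖ := norm_mul_le _ _
        _ ≤ iG * ‖E‖ := mul_le_mul_of_nonneg_right (hrnorm' j) (norm_nonneg _)
    have h2 : ‖R s j * (H' s * (R s j * P' s))‖ ≤ iG * (‖H' s‖ * (iG * ‖P' s‖)) := by
      calc ‖R s j * (H' s * (R s j * P' s))‖ ≤ ‖R s j‖ * ‖H' s * (R s j * P' s)‖ :=
            norm_mul_le _ _
        _ ≤ iG * (‖H' s‖ * (iG * ‖P' s‖)) := by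
            refine mul_le_mul (hrnorm' j) ?_ (norm_nonneg _) hiG.le
            calc ‖H' s * (R s j * P' s)‖ ≤ ‖H' s‖ * ‖R s j * P' s‖ := norm_mul_le _ _
              _ ≤ ‖H' s‖ * (iG * ‖P' s‖) := by
                  refine mul_le_mul_of_nonneg_left ?_ (norm_nonneg _)
                  calc ‖R s j * P' s‖ ≤ ‖R s j‖ * ‖P' s‖ := norm_mul_le _ _
                    _ ≤ iG * ‖P' s‖ :=
                        mul_le_mul_of_nonneg_right (hrnorm' j) (norm_nonneg _)
    calc ‖-(R s j * E) + R s j * (H' s * (R s j * P' s))‖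
        ≤ ‖-(R s j * E)‖ + ‖R s j * (H' s * (R s j * P' s))‖ := norm_add_le _ _
      _ ≤ iG * ‖E‖ + iG * (‖H' s‖ * (iG * ‖P' s‖)) := by
          rw [norm_neg]; exact add_le_add h1 h2
  have hb5 : ‖∑ j, ∑ k, (-(R s j * (R s k * P' s))) * (Pj s k * (H' s * Pj s j))‖
      ≤ (m : ℝ) * (iG * (iG * ‖P' s‖)) * ‖H' s‖ := by
    refine aux_double_sum_bound hpsa (hPidem s hs) hπsa (hPjidem s hs) hsum _ _
      (by positivity) (fun j k => ?_)
    rw [norm_neg]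
    calc ‖R s j * (R s k * P' s)‖ ≤ ‖R s j‖ * ‖R s k * P' s‖ := norm_mul_le _ _
      _ ≤ iG * (iG * ‖P' s‖) := by
          refine mul_le_mul (hrnorm' j) ?_ (norm_nonneg _) hiG.le
          calc ‖R s k * P' s‖ ≤ ‖R s k‖ * ‖P' s‖ := norm_mul_le _ _
            _ ≤ iG * ‖P' s‖ := mul_le_mul_of_nonneg_right (hrnorm' k) (norm_nonneg _)
  have part4a : ‖Q s * (D * P s)‖
      ≤ Real.sqrt m * ‖E‖ / g s + 2 * (m : ℝ) * ‖H' s‖ * ‖P' s‖ / (g s) ^ 2 := by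
    rw [hdiv1, hdiv2]
    have hsum4 : ‖Q s * (D * P s)‖
        ≤ Real.sqrt m * (iG * ‖E‖ + iG * (‖H' s‖ * (iG * ‖P' s‖)))
          + (m : ℝ) * (iG * (iG * ‖P' s‖)) * ‖H' s‖ := by
      rw [hQDP]
      exact le_trans (norm_add_le _ _) (add_le_add hb4 hb5)
    have e2 : Real.sqrt m * (iG * (‖H' s‖ * (iG * ‖P' s‖)))
        ≤ (m : ℝ) * (iG * (‖H' s‖ * (iG * ‖P' s‖))) :=
      mul_le_mul_of_nonneg_right hmle (by positivity)
    nlinarith [hsum4, e2]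
  have part4b : Real.sqrt m * ‖E‖ / g s + 2 * (m : ℝ) * ‖H' s‖ * ‖P' s‖ / (g s) ^ 2
      ≤ (m : ℝ) * ‖H'' s‖ / (g s) ^ 2
        + 6 * (m : ℝ) * Real.sqrt m * ‖H' s‖ ^ 2 / (g s) ^ 3 := by
    rw [hdiv1, hdiv2, hdiv2, hdiv3]
    have e3 : Real.sqrt m * ‖E‖ * iG
        ≤ (m:ℝ) * (‖H'' s‖ * iG ^ 2) + 4 * (m:ℝ) * Real.sqrt m * ‖H' s‖ ^ 2 * iG ^ 3 := by
      have h5 : ‖E‖ ≤ Real.sqrt m * ‖H'' s‖ * iG + 4 * (m:ℝ) * ‖H' s‖ ^ 2 * iG ^ 2 := by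
        have := part3
        rw [hdiv1, hdiv2] at this
        exact this
      calc Real.sqrt m * ‖E‖ * iG = Real.sqrt m * iG * ‖E‖ := by ring
        _ ≤ Real.sqrt m * iG * (Real.sqrt m * ‖H'' s‖ * iG + 4 * (m:ℝ) * ‖H' s‖ ^ 2 * iG ^ 2) :=
            mul_le_mul_of_nonneg_left h5 (by positivity)
        _ = Real.sqrt m * Real.sqrt m * (‖H'' s‖ * iG ^ 2)
            + 4 * (m:ℝ) * Real.sqrt m * ‖H' s‖ ^ 2 * iG ^ 3 := by ring
        _ = _ := by rw [hsm]
    have e4 : 2 * (m : ℝ) * ‖H' s‖ * ‖P' s‖ * iG ^ 2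
        ≤ 2 * (m : ℝ) * ‖H' s‖ * (Real.sqrt m * (‖H' s‖ * iG)) * iG ^ 2 := by
      have h6 : (2 * (m : ℝ) * ‖H' s‖ * iG ^ 2) * ‖P' s‖
          ≤ (2 * (m : ℝ) * ‖H' s‖ * iG ^ 2) * (Real.sqrt m * (‖H' s‖ * iG)) :=
        mul_le_mul_of_nonneg_left hP'norm (by positivity)
      nlinarith [h6]
    have e4' : 2 * (m : ℝ) * ‖H' s‖ * ‖P' s‖ * iG ^ 2
        ≤ 2 * (m:ℝ) * Real.sqrt m * ‖H' s‖ ^ 2 * iG ^ 3 := by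
      calc 2 * (m : ℝ) * ‖H' s‖ * ‖P' s‖ * iG ^ 2
          ≤ 2 * (m : ℝ) * ‖H' s‖ * (Real.sqrt m * (‖H' s‖ * iG)) * iG ^ 2 := e4
        _ = 2 * (m:ℝ) * Real.sqrt m * ‖H' s‖ ^ 2 * iG ^ 3 := by ring
    ring_nf at e3 e4' ⊢
    linarith [e3, e4']
  exact ⟨part4a, part4b⟩
end
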